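/- arXiv:1006.4785 — 3 statements merged into one kernel-verified Lean document; each statement's English description precedes it below -/
import Mathlib

section
/- Let $X=\mathbb{C}^n$ and let $\{I_j\}_{j=1}^\ell$ be subsets of $\{1,\dots,n\}$ satisfying the nesting-or-disjoint conditions (1.2), with $\hat I_j = I_j\setminus\bigcup_{I_k\subsetneq I_j}I_k$. Define, for an open set $U$ of product type, proper open convex cones $G_j\subset\mathbb{C}^{\hat I_j}$, and $\epsilon>0$: $V_j=\{z\in U: z_{\hat I_j}\in G_j,\ |z_{\hat I_\beta}|<\epsilon|z_{\hat I_j}| \text{ for } \beta \text{ with } I_\beta\subsetneq I_j\}$ and $S=V_1\cap\cdots\cap V_\ell$. Then $\overline{S}=\overline{V_1}\cap\cdots\cap\overline{V_\ell}$, where $\overline{V_j}=\{z\in\overline U: z_{\hat I_j}\in\overline{G_j},\ |z_{\hat I_\beta}|\le\epsilon|z_{\hat I_j}|\text{ for }I_\beta\subsetneq I_j\}$. -/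
/-!
A point `z` satisfying the closed conditions is the limit, as `t → 0⁺`, of the points
`approxCurve … t`: on the block `Î_k` the point `z` is shrunk by `(1 - 2t) ^ depth k` and pushed
into the open cone `G_k` along a unit vector `g_k`, by at most `t |z_k| + t²`; off the blocks it
moves towards a point of `W`. For `I_β ⊊ I_j` the block `Î_β` is deeper, so it is shrunk by an
extra factor `1 - 2t` and its minimal push `(t²) ^ depth β` is `t²` times that of `Î_j`. Together
with the cone inequality `δ (|u| + |v|) ≤ |u + v|` on `closure G_j`, which comes from properness by
compactness, this turns `|z_β| ≤ ε |z_j|` into `|y_β| < ε |y_j|` for small `t`.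
-/

open Filter Function Topology Set

section Cone

variable {E : Type*} [AddCommGroup E] [Module ℝ E] [TopologicalSpace E]

theorem smul_mem_closure_of_cone [ContinuousConstSMul ℝ E] {G : Set E}
    (hcone : ∀ x ∈ G, ∀ c : ℝ, 0 < c → c • x ∈ G) :
    ∀ x ∈ closure G, ∀ c : ℝ, 0 < c → c • x ∈ closure G := fun _ hx c hc =>
  map_mem_closure (continuous_const_smul c) hx fun y hy => hcone y hy c hc

theorem Convex.add_mem_of_mem_closure [IsTopologicalAddGroup E] [ContinuousConstSMul ℝ E]
    {G : Set E} (hconv : Convex ℝ G) (hopen : IsOpen G)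
    (hcone : ∀ x ∈ G, ∀ c : ℝ, 0 < c → c • x ∈ G) {u v : E} (hu : u ∈ closure G) (hv : v ∈ G) :
    u + v ∈ G := by
  have hmid : (1 / 2 : ℝ) • v + (1 / 2 : ℝ) • u ∈ G := by
    simpa only [hopen.interior_eq] using hconv.combo_interior_closure_mem_interior
      (by rwa [hopen.interior_eq]) hu (by norm_num) (by norm_num) (by norm_num)
  convert hcone _ hmid 2 two_pos using 1
  rw [smul_add, smul_smul, smul_smul]
  norm_num [add_comm]

end Cone

theorem exists_pos_mul_norm_add_norm_le_norm_add {E : Type*} [NormedAddCommGroup E]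
    [NormedSpace ℝ E] [ProperSpace E] {K : Set E} (hK : IsClosed K)
    (hcone : ∀ x ∈ K, ∀ c : ℝ, 0 < c → c • x ∈ K) (hsalient : ∀ x ∈ K, -x ∈ K → x = 0) :
    ∃ δ > 0, ∀ u ∈ K, ∀ v ∈ K, δ * (‖u‖ + ‖v‖) ≤ ‖u + v‖ := by
  set T : Set (E × E) := K ×ˢ K ∩ {p | ‖p.1‖ + ‖p.2‖ = 1}
  have hT : IsCompact T := by
    refine (isCompact_closedBall (0 : E × E) 1).of_isClosed_subset
      ((hK.prod hK).inter (isClosed_eq (by fun_prop) continuous_const)) ?_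
    rintro ⟨u, v⟩ ⟨-, huv : ‖u‖ + ‖v‖ = 1⟩
    rw [mem_closedBall_zero_iff, Prod.norm_def]
    exact max_le (by linarith [norm_nonneg v]) (by linarith [norm_nonneg u])
  have hpos : ∀ p ∈ T, 0 < ‖p.1 + p.2‖ := by
    rintro ⟨u, v⟩ ⟨⟨hu, hv⟩, huv : ‖u‖ + ‖v‖ = 1⟩
    refine norm_pos_iff.2 fun h => ?_
    obtain rfl : v = -u := eq_neg_of_add_eq_zero_right h
    obtain rfl : u = 0 := hsalient u hu hv
    simp at huv
  obtain ⟨δ, hδ, hδT⟩ :=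
    hT.exists_forall_le' (by fun_prop : Continuous fun p : E × E => ‖p.1 + p.2‖).continuousOn hpos
  refine ⟨δ, hδ, fun u hu v hv => ?_⟩
  rcases (add_nonneg (norm_nonneg u) (norm_nonneg v)).eq_or_lt with h | h
  · rw [← h, mul_zero]
    exact norm_nonneg _
  set c := ‖u‖ + ‖v‖
  have hnorm : ∀ x : E, ‖c⁻¹ • x‖ = c⁻¹ * ‖x‖ := fun x => by
    rw [norm_smul, Real.norm_of_nonneg (inv_nonneg.2 h.le)]
  have hmem : (c⁻¹ • u, c⁻¹ • v) ∈ T :=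
    ⟨⟨hcone u hu _ (inv_pos.2 h), hcone v hv _ (inv_pos.2 h)⟩,
      show ‖c⁻¹ • u‖ + ‖c⁻¹ • v‖ = 1 by rw [hnorm, hnorm, ← mul_add, inv_mul_cancel₀ h.ne']⟩
  have hδle : δ ≤ c⁻¹ * ‖u + v‖ := by simpa only [← smul_add, hnorm] using hδT _ hmem
  calc δ * c ≤ c⁻¹ * ‖u + v‖ * c := by gcongr
    _ = ‖u + v‖ := by field_simp

theorem DependsOn.mem_closure {ι : Type*} {α : ι → Type*} [∀ i, TopologicalSpace (α i)]
    [∀ i, AddGroup (α i)] [∀ i, IsTopologicalAddGroup (α i)] {G : Set (∀ i, α i)} {s : Set ι}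
    (h : DependsOn (· ∈ G) s) : DependsOn (· ∈ closure G) s := by
  suffices H : ∀ x y : ∀ i, α i, (∀ i ∈ s, x i = y i) → x ∈ closure G → y ∈ closure G from
    fun x y hxy => propext ⟨H x y hxy, H y x fun i hi => (hxy i hi).symm⟩
  intro x y hxy hx
  have hmaps : MapsTo (· + (-x + y)) G G := fun u hu =>
    (h (x := u) fun i hi => by simp [hxy i hi]).mp hu
  simpa only [add_neg_cancel_left] using map_mem_closure (continuous_add_const (-x + y)) hx hmaps

theorem exists_pos_forall_le_of_finite {ι : Type*} [Finite ι] {f : ι → ℝ} (hf : ∀ i, 0 < f i) :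
    ∃ c > 0, ∀ i, c ≤ f i := by
  obtain ⟨c, hc, hcf⟩ := ((eventually_all.2 fun i => (eventually_lt_nhds (hf i)).filter_mono
    nhdsWithin_le_nhds).and (self_mem_nhdsWithin : ∀ᶠ c in 𝓝[>] (0 : ℝ), c ∈ Ioi 0)).exists
  exact ⟨c, hcf, fun i => (hc i).le⟩

section SmulAdd

variable {E : Type*} [SeminormedAddCommGroup E] [NormedSpace ℝ E] {a s : ℝ} {x y : E}

theorem norm_smul_add_smul_le (ha : 0 ≤ a) (hs : 0 ≤ s) (hy : ‖y‖ = 1) :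
    ‖a • x + s • y‖ ≤ a * ‖x‖ + s := by
  simpa [norm_smul, abs_of_nonneg ha, abs_of_nonneg hs, hy] using norm_add_le (a • x) (s • y)

theorem sub_le_norm_smul_add_smul (ha : 0 ≤ a) (hs : 0 ≤ s) (hy : ‖y‖ = 1) :
    a * ‖x‖ - s ≤ ‖a • x + s • y‖ := by
  simpa [norm_smul, abs_of_nonneg ha, abs_of_nonneg hs, hy] using
    norm_sub_le_norm_add (a • x) (s • y)

end SmulAdd

section Block

variable {ι : Type*}

noncomputable def blockProj (A : Finset ι) : (ι → ℂ) →L[ℝ] EuclideanSpace ℂ A :=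
  (PiLp.continuousLinearEquiv 2 ℝ fun _ : A => ℂ).symm.toContinuousLinearMap ∘L
    ContinuousLinearMap.pi fun i => ContinuousLinearMap.proj (i : ι)

@[simp] theorem blockProj_apply (A : Finset ι) (z : ι → ℂ) (i : A) : blockProj A z i = z i := rfl

theorem norm_blockProj (A : Finset ι) (z : ι → ℂ) :
    ‖blockProj A z‖ = √(∑ i ∈ A, ‖z i‖ ^ 2) := by
  rw [EuclideanSpace.norm_eq, ← Finset.sum_coe_sort A]
  rfl

theorem blockProj_eq_blockProj_iff {A : Finset ι} {u v : ι → ℂ} :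
    blockProj A u = blockProj A v ↔ ∀ i ∈ A, u i = v i := by
  refine ⟨fun h i hi => by simpa using congr($h ⟨i, hi⟩), fun h => ?_⟩
  ext i
  exact h i i.2

variable [DecidableEq ι]

noncomputable def blockExt (A : Finset ι) : EuclideanSpace ℂ A →L[ℝ] (ι → ℂ) :=
  ContinuousLinearMap.pi fun i => if h : i ∈ A then
    ContinuousLinearMap.proj (⟨i, h⟩ : A) ∘L
      (PiLp.continuousLinearEquiv 2 ℝ fun _ : A => ℂ).toContinuousLinearMap
  else 0

@[simp] theorem blockProj_blockExt (A : Finset ι) (x : EuclideanSpace ℂ A) :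
    blockProj A (blockExt A x) = x := by
  ext i
  simp [blockExt, i.2]

end Block

/-- `G` is the cylinder over a proper open convex cone of `ℂ^A`: membership depends only on the
coordinates in `A`, and the closed cone in `ℂ^A` contains no line. -/
structure IsBlockCone {ι : Type*} (A : Finset ι) (G : Set (ι → ℂ)) : Prop where
  isOpen : IsOpen G
  convex : Convex ℝ G
  smul_mem : ∀ x ∈ G, ∀ c : ℝ, 0 < c → c • x ∈ G
  nonempty : G.Nonempty
  zero_notMem : 0 ∉ G
  dependsOn : DependsOn (· ∈ G) A
  salient : ∀ x ∈ closure G, -x ∈ closure G → ∀ i ∈ A, x i = 0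

namespace IsBlockCone

variable {ι : Type*} {A : Finset ι} {G : Set (ι → ℂ)}

theorem exists_norm_blockProj_eq_one (hG : IsBlockCone A G) :
    ∃ g ∈ G, ‖blockProj A g‖ = 1 := by
  obtain ⟨g, hg⟩ := hG.nonempty
  have hpos : 0 < ‖blockProj A g‖ := norm_pos_iff.2 fun h =>
    hG.zero_notMem ((hG.dependsOn (blockProj_eq_blockProj_iff.1 (h.trans (map_zero _).symm))).mp hg)
  refine ⟨‖blockProj A g‖⁻¹ • g, hG.smul_mem g hg _ (inv_pos.2 hpos), ?_⟩
  rw [map_smul, norm_smul, Real.norm_of_nonneg (inv_nonneg.2 hpos.le), inv_mul_cancel₀ hpos.ne']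

theorem exists_pos_mul_le_norm_blockProj_add [DecidableEq ι] (hG : IsBlockCone A G) :
    ∃ δ > 0, ∀ u ∈ closure G, ∀ v ∈ closure G,
      δ * (‖blockProj A u‖ + ‖blockProj A v‖) ≤ ‖blockProj A (u + v)‖ := by
  have hcone := smul_mem_closure_of_cone hG.smul_mem
  obtain ⟨δ, hδ, h⟩ := exists_pos_mul_norm_add_norm_le_norm_add
    (K := blockExt A ⁻¹' closure G) (isClosed_closure.preimage (blockExt A).continuous)
    (fun x hx c hc => by simpa only [mem_preimage, map_smul] using hcone _ hx c hc)
    (fun x hx hx' => by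
      rw [← blockProj_blockExt A x, (blockProj_eq_blockProj_iff (v := 0)).2, map_zero]
      exact hG.salient _ hx (by simpa only [mem_preimage, map_neg] using hx'))
  have hmem : ∀ u ∈ closure G, blockProj A u ∈ blockExt A ⁻¹' closure G := fun u hu =>
    (hG.dependsOn.mem_closure (blockProj_eq_blockProj_iff.1 (blockProj_blockExt A _).symm)).mp hu
  exact ⟨δ, hδ, fun u hu v hv => by simpa only [map_add] using h _ (hmem u hu) _ (hmem v hv)⟩

theorem smul_add_smul_mem (hG : IsBlockCone A G) {a s : ℝ} {u g : ι → ℂ} (ha : 0 < a)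
    (hu : u ∈ closure G) (hs : 0 < s) (hg : g ∈ G) : a • u + s • g ∈ G :=
  hG.convex.add_mem_of_mem_closure hG.isOpen hG.smul_mem
    (smul_mem_closure_of_cone hG.smul_mem u hu a ha) (hG.smul_mem g hg s hs)

end IsBlockCone

section Glue

variable {ι κ α : Type*}

open Classical in
noncomputable def glue (s : κ → Finset ι) (f : κ → ι → α) (f₀ : ι → α) : ι → α := fun i =>
  if h : ∃ k, i ∈ s k then f h.choose i else f₀ i

theorem glue_of_mem {s : κ → Finset ι} (hs : Pairwise (Disjoint on s)) (f : κ → ι → α)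
    (f₀ : ι → α) {k : κ} {i : ι} (hi : i ∈ s k) : glue s f f₀ i = f k i := by
  have h : ∃ k, i ∈ s k := ⟨k, hi⟩
  obtain rfl : h.choose = k := hs.eq (Finset.not_disjoint_iff.2 ⟨i, h.choose_spec, hi⟩)
  exact dif_pos h

theorem glue_of_forall_notMem (s : κ → Finset ι) (f : κ → ι → α) (f₀ : ι → α) {i : ι}
    (hi : ∀ k, i ∉ s k) : glue s f f₀ i = f₀ i :=
  dif_neg fun h => hi _ h.choose_spec

end Glue

theorem blockProj_glue {ι κ : Type*} {s : κ → Finset ι} (hs : Pairwise (Disjoint on s))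
    (f : κ → ι → ℂ) (f₀ : ι → ℂ) (k : κ) : blockProj (s k) (glue s f f₀) = blockProj (s k) (f k) :=
  blockProj_eq_blockProj_iff.2 fun _ hi => glue_of_mem hs f f₀ hi

theorem tendsto_glue {ι κ α β : Type*} [TopologicalSpace α] (s : κ → Finset ι)
    {f : β → κ → ι → α} {f₀ : β → ι → α} {l : Filter β} {z : ι → α}
    (hf : ∀ k, Tendsto (fun t => f t k) l (𝓝 z)) (hf₀ : Tendsto f₀ l (𝓝 z)) :
    Tendsto (fun t => glue s (f t) (f₀ t)) l (𝓝 z) := by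
  classical
  refine tendsto_pi_nhds.2 fun i => ?_
  by_cases h : ∃ k, i ∈ s k
  · simpa only [glue, dif_pos h] using tendsto_pi_nhds.1 (hf h.choose) i
  · simpa only [glue, dif_neg h] using tendsto_pi_nhds.1 hf₀ i

theorem glue_mem_of_dependsOn {ι κ : Type*} {s : κ → Finset ι} {W : Set (ι → ℂ)}
    (hconv : Convex ℝ W) (hopen : IsOpen W) (hdep : DependsOn (· ∈ W) {i | ∀ k, i ∉ s k})
    (f : κ → ι → ℂ) {z w : ι → ℂ} (hz : z ∈ closure W) (hw : w ∈ W) {t : ℝ} (ht0 : 0 < t)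
    (ht1 : t ≤ 1) : glue s f ((1 - t) • z + t • w) ∈ W := by
  have hcombo : t • w + (1 - t) • z ∈ W := by
    simpa only [hopen.interior_eq] using hconv.combo_interior_closure_mem_interior
      (by rwa [hopen.interior_eq]) hz ht0 (by linarith) (by ring)
  refine (hdep fun i hi => ?_).mp hcombo
  exact (congrFun (add_comm _ _) i).trans (glue_of_forall_notMem _ _ _ hi).symm

section Perturbation

noncomputable def perturbation (δ t A η : ℝ) : ℝ := if δ / 2 * η ≤ A then t * A else η

variable {δ t A η : ℝ}

theorem perturbation_pos (hδ : 0 < δ) (ht : 0 < t) (hη : 0 < η) : 0 < perturbation δ t A η := by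
  unfold perturbation
  split_ifs with h
  · exact mul_pos ht (lt_of_lt_of_le (by positivity) h)
  · exact hη

theorem perturbation_le (ht : 0 ≤ t) (hA : 0 ≤ A) (hη : 0 ≤ η) :
    perturbation δ t A η ≤ t * A + η := by
  unfold perturbation
  split_ifs <;> nlinarith

theorem lt_mul_of_le_add_perturbation {ε Aj Aβ ηj ηβ Yj Yβ : ℝ} (hε : 0 < ε) (hδ : 0 < δ)
    (ht : 0 < t) (ht1 : t ≤ 1) (htεδ : t < ε * δ / 2) (hAj : 0 ≤ Aj) (hAβ : 0 ≤ Aβ)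
    (hηj : 0 < ηj) (hηβ : ηβ ≤ t ^ 2 * ηj) (hA : Aβ ≤ (1 - 2 * t) * (ε * Aj))
    (hYβ : Yβ ≤ Aβ + perturbation δ t Aβ ηβ) (hYj : Aj - perturbation δ t Aj ηj ≤ Yj)
    (hYj' : δ * (Aj + perturbation δ t Aj ηj) ≤ Yj) : Yβ < ε * Yj := by
  have hAβ' : Aβ + perturbation δ t Aβ ηβ ≤ max ((1 + t) * Aβ) (Aβ + t ^ 2 * ηj) := by
    unfold perturbation
    split_ifs
    · exact le_max_of_le_left (by linarith)
    · exact le_max_of_le_right (by linarith)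
  refine hYβ.trans_lt (hAβ'.trans_lt ?_)
  unfold perturbation at hYj hYj'
  split_ifs at hYj hYj' with hreg
  · -- `Aj` dominates the perturbation: the triangle inequality bounds `Yj` from below.
    have hAj' : 0 < Aj := lt_of_lt_of_le (by positivity) hreg
    have hεAj : 0 < ε * Aj := mul_pos hε hAj'
    have hηj' : t ^ 2 * ηj < t * (ε * Aj) := by
      refine lt_of_mul_lt_mul_left ?_ hδ.le
      calc δ * (t ^ 2 * ηj) = t ^ 2 * (δ * ηj) := by ring
        _ ≤ t ^ 2 * (2 * Aj) := mul_le_mul_of_nonneg_left (by linarith) (by positivity)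
        _ = 2 * t * (t * Aj) := by ring
        _ < 2 * t * (ε * δ / 2 * Aj) := by gcongr
        _ = δ * (t * (ε * Aj)) := by ring
    have h1 : (1 + t) * Aβ < ε * ((1 - t) * Aj) :=
      calc (1 + t) * Aβ ≤ (1 + t) * ((1 - 2 * t) * (ε * Aj)) := by gcongr
        _ = ε * ((1 - t) * Aj) - 2 * t ^ 2 * (ε * Aj) := by ring
        _ < ε * ((1 - t) * Aj) := by linarith [mul_pos (pow_pos ht 2) hεAj]
    have h2 : Aβ + t ^ 2 * ηj < ε * ((1 - t) * Aj) := by nlinarith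
    have h3 : ε * ((1 - t) * Aj) ≤ ε * Yj := by gcongr; linarith
    exact max_lt (h1.trans_le h3) (h2.trans_le h3)
  · -- Otherwise the cone inequality bounds `Yj` from below by `δ * ηj`.
    have hεAj : 0 ≤ ε * Aj := mul_nonneg hε.le hAj
    have hAβj : Aβ ≤ ε * Aj := by nlinarith
    have hAj' : ε * Aj < ε * δ / 2 * ηj := by
      calc ε * Aj < ε * (δ / 2 * ηj) := by gcongr; linarith
        _ = ε * δ / 2 * ηj := by ring
    have ht2 : t ^ 2 * ηj < ε * δ / 2 * ηj := by
      gcongr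
      nlinarith
    have h1 : (1 + t) * Aβ < ε * (δ * ηj) := by
      calc (1 + t) * Aβ ≤ (1 + t) * ((1 - 2 * t) * (ε * Aj)) := by gcongr
        _ = ε * Aj - t * (ε * Aj) - 2 * t ^ 2 * (ε * Aj) := by ring
        _ ≤ ε * Aj := by nlinarith
        _ < ε * (δ * ηj) := by linarith
    have h2 : Aβ + t ^ 2 * ηj < ε * (δ * ηj) := by linarith
    have h3 : ε * (δ * ηj) ≤ ε * Yj := by gcongr; nlinarith
    exact max_lt (h1.trans_le h3) (h2.trans_le h3)

end Perturbation

theorem Finset.pairwise_disjoint_sdiff_biUnion_ssubset {κ α : Type*} [Fintype κ] [DecidableEq α]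
    {I : κ → Finset α} (h : ∀ j k, j ≠ k → I j ⊂ I k ∨ I k ⊂ I j ∨ Disjoint (I j) (I k)) :
    Pairwise (Disjoint on fun j => I j \ (Finset.univ.filter fun k => I k ⊂ I j).biUnion I) := by
  have key : ∀ j k, I j ⊂ I k → Disjoint (I j \ (Finset.univ.filter fun m => I m ⊂ I j).biUnion I)
      (I k \ (Finset.univ.filter fun m => I m ⊂ I k).biUnion I) := fun j k hjk =>
    Finset.disjoint_sdiff.mono_left (Finset.sdiff_subset.trans
      (Finset.subset_biUnion_of_mem I (by simpa using hjk)))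
  intro j k hjk
  rcases h j k hjk with hjk | hkj | hd
  · exact key j k hjk
  · exact (key k j hkj).symm
  · exact hd.mono Finset.sdiff_subset Finset.sdiff_subset

section Depth

variable {n ℓ : ℕ} {I : Fin ℓ → Finset (Fin n)}

def depth (I : Fin ℓ → Finset (Fin n)) (k : Fin ℓ) : ℕ := n + 1 - (I k).card

theorem depth_pos (k : Fin ℓ) : 0 < depth I k := by
  have := (I k).card_le_univ
  simp only [Fintype.card_fin] at this
  unfold depth
  omega

theorem depth_lt_depth {β j : Fin ℓ} (h : I β ⊂ I j) : depth I j < depth I β := by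
  have := Finset.card_lt_card h
  have := (I j).card_le_univ
  simp only [Fintype.card_fin] at this
  unfold depth
  omega

variable {q : ℝ}

theorem pow_depth_le (h0 : 0 ≤ q) (h1 : q ≤ 1) (k : Fin ℓ) : q ^ depth I k ≤ q :=
  pow_le_of_le_one h0 h1 (depth_pos k).ne'

theorem pow_depth_le_mul (h0 : 0 ≤ q) (h1 : q ≤ 1) {β j : Fin ℓ} (h : I β ⊂ I j) :
    q ^ depth I β ≤ q * q ^ depth I j := by
  rw [← pow_succ']
  exact pow_le_pow_of_le_one h0 h1 (depth_lt_depth h)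

end Depth

section Curve

variable {n ℓ : ℕ} {I Ihat : Fin ℓ → Finset (Fin n)} {G : Fin ℓ → Set (Fin n → ℂ)}
  {δ ε t : ℝ} {g : Fin ℓ → Fin n → ℂ} {z w : Fin n → ℂ}

noncomputable def blockShift (I Ihat : Fin ℓ → Finset (Fin n)) (δ : ℝ) (z : Fin n → ℂ) (t : ℝ)
    (k : Fin ℓ) : ℝ :=
  perturbation δ t ((1 - 2 * t) ^ depth I k * ‖blockProj (Ihat k) z‖) ((t ^ 2) ^ depth I k)

noncomputable def approxCurve (I Ihat : Fin ℓ → Finset (Fin n)) (δ : ℝ) (g : Fin ℓ → Fin n → ℂ)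
    (z w : Fin n → ℂ) (t : ℝ) : Fin n → ℂ :=
  glue Ihat (fun k => (1 - 2 * t) ^ depth I k • z + blockShift I Ihat δ z t k • g k)
    ((1 - t) • z + t • w)

theorem blockShift_pos (hδ : 0 < δ) (ht0 : 0 < t) (k : Fin ℓ) : 0 < blockShift I Ihat δ z t k :=
  perturbation_pos hδ ht0 (by positivity)

theorem blockShift_le (ht0 : 0 < t) (ht : t < 1 / 2) (k : Fin ℓ) :
    blockShift I Ihat δ z t k ≤ t * ‖blockProj (Ihat k) z‖ + t ^ 2 := by
  have ha := pow_depth_le (q := 1 - 2 * t) (I := I) (by linarith) (by linarith) k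
  refine (perturbation_le ht0.le (mul_nonneg (pow_nonneg (by linarith) _) (norm_nonneg _))
    (by positivity)).trans (add_le_add ?_ (pow_depth_le (sq_nonneg t) (by nlinarith) k))
  exact mul_le_mul_of_nonneg_left (mul_le_of_le_one_left (norm_nonneg _) (by linarith)) ht0.le

theorem blockProj_approxCurve (hdisj : Pairwise (Disjoint on Ihat)) (k : Fin ℓ) :
    blockProj (Ihat k) (approxCurve I Ihat δ g z w t) = (1 - 2 * t) ^ depth I k •
      blockProj (Ihat k) z + blockShift I Ihat δ z t k • blockProj (Ihat k) (g k) := by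
  rw [approxCurve, blockProj_glue hdisj, map_add, map_smul, map_smul]

section Estimates

variable (hdisj : Pairwise (Disjoint on Ihat)) (hg : ∀ k, ‖blockProj (Ihat k) (g k)‖ = 1)
  (hδ : 0 < δ) (ht0 : 0 < t) (ht : t < 1 / 2)
include hdisj hg hδ ht0 ht

theorem norm_blockProj_approxCurve_le (k : Fin ℓ) :
    ‖blockProj (Ihat k) (approxCurve I Ihat δ g z w t)‖ ≤
      (1 - 2 * t) ^ depth I k * ‖blockProj (Ihat k) z‖ + blockShift I Ihat δ z t k := by
  rw [blockProj_approxCurve hdisj]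
  exact norm_smul_add_smul_le (pow_nonneg (by linarith) _) (blockShift_pos hδ ht0 k).le (hg k)

theorem sub_le_norm_blockProj_approxCurve (k : Fin ℓ) :
    (1 - 2 * t) ^ depth I k * ‖blockProj (Ihat k) z‖ - blockShift I Ihat δ z t k ≤
      ‖blockProj (Ihat k) (approxCurve I Ihat δ g z w t)‖ := by
  rw [blockProj_approxCurve hdisj]
  exact sub_le_norm_smul_add_smul (pow_nonneg (by linarith) _) (blockShift_pos hδ ht0 k).le (hg k)

theorem norm_blockProj_approxCurve_lt {R : ℝ} {k : Fin ℓ} (hzR : ‖blockProj (Ihat k) z‖ ≤ R)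
    (htR : t < R) : ‖blockProj (Ihat k) (approxCurve I Ihat δ g z w t)‖ < R := by
  have ha := pow_depth_le (q := 1 - 2 * t) (I := I) (by linarith) (by linarith) k
  have hs := blockShift_le (I := I) (Ihat := Ihat) (δ := δ) (z := z) ht0 ht k
  have hM : (1 - 2 * t) ^ depth I k * ‖blockProj (Ihat k) z‖ ≤ (1 - 2 * t) * R :=
    mul_le_mul ha hzR (norm_nonneg _) (by linarith)
  nlinarith [norm_blockProj_approxCurve_le hdisj hg hδ ht0 ht (I := I) (z := z) (w := w) k,
    norm_nonneg (blockProj (Ihat k) z)]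

theorem mul_le_norm_blockProj_approxCurve {k : Fin ℓ} (hG : IsBlockCone (Ihat k) (G k))
    (hcone : ∀ u ∈ closure (G k), ∀ v ∈ closure (G k),
      δ * (‖blockProj (Ihat k) u‖ + ‖blockProj (Ihat k) v‖) ≤ ‖blockProj (Ihat k) (u + v)‖)
    (hgG : g k ∈ G k) (hzG : z ∈ closure (G k)) :
    δ * ((1 - 2 * t) ^ depth I k * ‖blockProj (Ihat k) z‖ + blockShift I Ihat δ z t k) ≤
      ‖blockProj (Ihat k) (approxCurve I Ihat δ g z w t)‖ := by
  have ha : 0 < (1 - 2 * t) ^ depth I k := pow_pos (by linarith) _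
  have hs := blockShift_pos (I := I) (Ihat := Ihat) (z := z) hδ ht0 k
  have h := hcone _ (smul_mem_closure_of_cone hG.smul_mem z hzG _ ha) _
    (subset_closure (hG.smul_mem _ hgG _ hs))
  rwa [map_add, map_smul, map_smul, ← blockProj_approxCurve (w := w) hdisj, norm_smul, norm_smul,
    hg, Real.norm_of_nonneg ha.le, Real.norm_of_nonneg hs.le, mul_one] at h

theorem norm_blockProj_approxCurve_lt_mul {j β : Fin ℓ} (hβ : I β ⊂ I j)
    (hG : IsBlockCone (Ihat j) (G j))
    (hcone : ∀ u ∈ closure (G j), ∀ v ∈ closure (G j),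
      δ * (‖blockProj (Ihat j) u‖ + ‖blockProj (Ihat j) v‖) ≤ ‖blockProj (Ihat j) (u + v)‖)
    (hgG : g j ∈ G j) (hzG : z ∈ closure (G j))
    (hzε : ‖blockProj (Ihat β) z‖ ≤ ε * ‖blockProj (Ihat j) z‖) (hε : 0 < ε)
    (htεδ : t < ε * δ / 2) :
    ‖blockProj (Ihat β) (approxCurve I Ihat δ g z w t)‖ <
      ε * ‖blockProj (Ihat j) (approxCurve I Ihat δ g z w t)‖ := by
  have ha : ∀ k, 0 < (1 - 2 * t) ^ depth I k := fun k => pow_pos (by linarith) _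
  have hA : (1 - 2 * t) ^ depth I β * ‖blockProj (Ihat β) z‖ ≤
      (1 - 2 * t) * (ε * ((1 - 2 * t) ^ depth I j * ‖blockProj (Ihat j) z‖)) :=
    calc _ ≤ ((1 - 2 * t) * (1 - 2 * t) ^ depth I j) * (ε * ‖blockProj (Ihat j) z‖) :=
          mul_le_mul (pow_depth_le_mul (by linarith) (by linarith) hβ) hzε (norm_nonneg _)
            (mul_nonneg (by linarith) (ha j).le)
      _ = _ := by ring
  exact lt_mul_of_le_add_perturbation hε hδ ht0 (by linarith) htεδ
    (mul_nonneg (ha j).le (norm_nonneg _)) (mul_nonneg (ha β).le (norm_nonneg _)) (by positivity)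
    (pow_depth_le_mul (sq_nonneg t) (by nlinarith) hβ) hA
    (norm_blockProj_approxCurve_le hdisj hg hδ ht0 ht β)
    (sub_le_norm_blockProj_approxCurve hdisj hg hδ ht0 ht j)
    (mul_le_norm_blockProj_approxCurve hdisj hg hδ ht0 ht hG hcone hgG hzG)

end Estimates

theorem approxCurve_mem (hdisj : Pairwise (Disjoint on Ihat)) {j : Fin ℓ}
    (hG : IsBlockCone (Ihat j) (G j)) (hgG : g j ∈ G j) (hzG : z ∈ closure (G j)) (hδ : 0 < δ)
    (ht0 : 0 < t) (ht : t < 1 / 2) : approxCurve I Ihat δ g z w t ∈ G j :=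
  (hG.dependsOn fun _ hi => (glue_of_mem hdisj _ _ hi).symm).mp
    (hG.smul_add_smul_mem (pow_pos (by linarith) _) hzG (blockShift_pos hδ ht0 j) hgG)

theorem approxCurve_mem_of_dependsOn {W : Set (Fin n → ℂ)} (hsub : ∀ k, Ihat k ⊆ I k)
    (hconv : Convex ℝ W) (hopen : IsOpen W) (hdep : DependsOn (· ∈ W) {i | ∀ k, i ∉ I k})
    (hz : z ∈ closure W) (hw : w ∈ W) (ht0 : 0 < t) (ht1 : t ≤ 1) :
    approxCurve I Ihat δ g z w t ∈ W :=
  glue_mem_of_dependsOn hconv hopen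
    (hdep.mono fun i (hi : ∀ k, i ∉ I k) k hk => hi k (hsub k hk)) _ hz hw ht0 ht1

theorem tendsto_approxCurve (hδ : 0 < δ) :
    Tendsto (approxCurve I Ihat δ g z w) (𝓝[>] 0) (𝓝 z) := by
  have hlim : ∀ {f : ℝ → ℝ} {y : ℝ}, Continuous f → f 0 = y → Tendsto f (𝓝[>] 0) (𝓝 y) :=
    fun hf hy => (hf.tendsto' 0 _ hy).mono_left nhdsWithin_le_nhds
  have hshift : ∀ k, Tendsto (fun t => blockShift I Ihat δ z t k) (𝓝[>] 0) (𝓝 0) := fun k => by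
    have hsmall : ∀ᶠ t in 𝓝[>] (0 : ℝ), t ∈ Ioo 0 (1 / 2) := Ioo_mem_nhdsGT (by norm_num)
    refine tendsto_of_tendsto_of_tendsto_of_le_of_le' tendsto_const_nhds
      (hlim (f := fun t => t * ‖blockProj (Ihat k) z‖ + t ^ 2) (by fun_prop) (by simp))
      (hsmall.mono fun t ht => (blockShift_pos hδ ht.1 k).le)
      (hsmall.mono fun t ht => blockShift_le ht.1 ht.2 k)
  refine tendsto_glue Ihat (fun k => ?_) ?_
  · have hscale := hlim (f := fun t => (1 - 2 * t) ^ depth I k) (y := 1) (by fun_prop) (by simp)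
    simpa using (hscale.smul_const z).add ((hshift k).smul_const (g k))
  · simpa using ((hlim (f := fun t => 1 - t) (y := 1) (by fun_prop) (by simp)).smul_const z).add
      ((hlim (f := id) continuous_id rfl).smul_const w)

end Curve

theorem mem_closure_biInter_of_nonstrict {n ℓ : ℕ} {I Ihat : Fin ℓ → Finset (Fin n)}
    {G : Fin ℓ → Set (Fin n → ℂ)} {R : Fin ℓ → ℝ} {W U : Set (Fin n → ℂ)}
    {V : Fin ℓ → Set (Fin n → ℂ)} {ε : ℝ} (hdisj : Pairwise (Disjoint on Ihat))
    (hsub : ∀ k, Ihat k ⊆ I k) (hG : ∀ j, IsBlockCone (Ihat j) (G j)) (hWconv : Convex ℝ W)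
    (hWopen : IsOpen W) (hWdep : DependsOn (· ∈ W) {i | ∀ k, i ∉ I k})
    (hU : U = {z | (∀ k, ‖blockProj (Ihat k) z‖ < R k) ∧ z ∈ W}) (hε : 0 < ε)
    (hV : ∀ j, V j = {z ∈ U | z ∈ G j ∧
      ∀ β, I β ⊂ I j → ‖blockProj (Ihat β) z‖ < ε * ‖blockProj (Ihat j) z‖})
    {P : Set (Fin ℓ)} {z : Fin n → ℂ} (hzU : z ∈ closure U) (hzG : ∀ j ∈ P, z ∈ closure (G j))
    (hzε : ∀ j ∈ P, ∀ β, I β ⊂ I j → ‖blockProj (Ihat β) z‖ ≤ ε * ‖blockProj (Ihat j) z‖) :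
    z ∈ closure (⋂ j ∈ P, V j) := by
  subst hU
  obtain ⟨_, hxR, -⟩ := closure_nonempty_iff.1 ⟨z, hzU⟩
  obtain ⟨R₀, hR₀, hR₀R⟩ :=
    exists_pos_forall_le_of_finite fun k => (norm_nonneg _).trans_lt (hxR k)
  have hzR : ∀ k, ‖blockProj (Ihat k) z‖ ≤ R k := fun k =>
    closure_minimal (t := {x | ‖blockProj (Ihat k) x‖ ≤ R k}) (fun x hx => (hx.1 k).le)
      (isClosed_le (by fun_prop) continuous_const) hzU
  have hzW : z ∈ closure W := closure_mono (fun x hx => hx.2) hzU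
  obtain ⟨w, hw⟩ := closure_nonempty_iff.1 ⟨z, hzW⟩
  choose δ' hδ' hcone' using fun k => (hG k).exists_pos_mul_le_norm_blockProj_add
  obtain ⟨δ, hδ, hδδ'⟩ := exists_pos_forall_le_of_finite hδ'
  have hcone : ∀ k, ∀ u ∈ closure (G k), ∀ v ∈ closure (G k),
      δ * (‖blockProj (Ihat k) u‖ + ‖blockProj (Ihat k) v‖) ≤ ‖blockProj (Ihat k) (u + v)‖ :=
    fun k u hu v hv => (mul_le_mul_of_nonneg_right (hδδ' k) (by positivity)).trans
      (hcone' k u hu v hv)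
  choose g hgG hg using fun k => (hG k).exists_norm_blockProj_eq_one
  refine mem_closure_of_tendsto
    (tendsto_approxCurve (I := I) (Ihat := Ihat) (g := g) (w := w) hδ) ?_
  have ht₀ : (0 : ℝ) < min (min (1 / 2) (ε * δ / 2)) R₀ := by positivity
  filter_upwards [Ioo_mem_nhdsGT ht₀] with t ⟨ht0, ht⟩
  obtain ⟨⟨ht2, htεδ⟩, htR⟩ : (t < 1 / 2 ∧ t < ε * δ / 2) ∧ t < R₀ := by
    simpa only [lt_min_iff] using ht
  refine mem_iInter₂.2 fun j hj => (hV j).symm ▸ ⟨⟨fun k => ?_, ?_⟩, ?_, fun β hβ => ?_⟩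
  · exact norm_blockProj_approxCurve_lt hdisj hg hδ ht0 ht2 (hzR k) (htR.trans_le (hR₀R k))
  · exact approxCurve_mem_of_dependsOn hsub hWconv hWopen hWdep hzW hw ht0 (by linarith)
  · exact approxCurve_mem hdisj (hG j) (hgG j) (hzG j hj) hδ ht0 ht2
  · exact norm_blockProj_approxCurve_lt_mul hdisj hg hδ ht0 ht2 hβ (hG j) (hcone j) (hgG j)
      (hzG j hj) (hzε j hj β hβ) hε htεδ

theorem stmt_6_general
    (n ℓ : ℕ) (I : Fin ℓ → Finset (Fin n))
    (h1 : ∀ j k, j ≠ k → I j ⊂ I k ∨ I k ⊂ I j ∨ Disjoint (I j) (I k))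
    (Ihat : Fin ℓ → Finset (Fin n))
    (hIhat : ∀ j, Ihat j = I j \ (Finset.univ.filter (fun k => I k ⊂ I j)).biUnion I)
    (nrm : Finset (Fin n) → (Fin n → ℂ) → ℝ)
    (hnrm : ∀ A z, nrm A z = Real.sqrt (∑ i ∈ A, ‖z i‖ ^ 2))
    (G : Fin ℓ → Set (Fin n → ℂ))
    (hGopen : ∀ j, IsOpen (G j))
    (hGconv : ∀ j, Convex ℝ (G j))
    (hGcone : ∀ j, ∀ z ∈ G j, ∀ c : ℝ, 0 < c → c • z ∈ G j)
    (hGne : ∀ j, (G j).Nonempty)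
    (hG0 : ∀ j, (0 : Fin n → ℂ) ∉ G j)
    (hGdep : ∀ j, ∀ z w : Fin n → ℂ, (∀ i ∈ Ihat j, z i = w i) → (z ∈ G j ↔ w ∈ G j))
    (hGproper : ∀ j, ∀ z, z ∈ closure (G j) → -z ∈ closure (G j) → ∀ i ∈ Ihat j, z i = 0)
    (R : Fin ℓ → ℝ)
    (W : Set (Fin n → ℂ)) (hWconv : Convex ℝ W) (hWopen : IsOpen W)
    (hWdep : ∀ z w : Fin n → ℂ, (∀ i, (∀ j, i ∉ I j) → z i = w i) → (z ∈ W ↔ w ∈ W))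
    (U : Set (Fin n → ℂ))
    (hU : U = {z | (∀ j, nrm (Ihat j) z < R j) ∧ z ∈ W})
    (ε : ℝ) (hε : 0 < ε)
    (V : Fin ℓ → Set (Fin n → ℂ))
    (hV : ∀ j, V j = {z ∈ U | z ∈ G j ∧ ∀ β, I β ⊂ I j → nrm (Ihat β) z < ε * nrm (Ihat j) z})
    (S : Set (Fin n → ℂ)) (hS : S = ⋂ j, V j)
    : closure S = ⋂ j, closure (V j) ∧
      ∀ j, closure (V j) =
        {z | z ∈ closure U ∧ z ∈ closure (G j) ∧
          ∀ β, I β ⊂ I j → nrm (Ihat β) z ≤ ε * nrm (Ihat j) z} := by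
  obtain rfl : nrm = fun A z => ‖blockProj A z‖ :=
    funext₂ fun A z => (hnrm A z).trans (norm_blockProj A z).symm
  have hdisj : Pairwise (Disjoint on Ihat) := by
    simpa only [← hIhat] using Finset.pairwise_disjoint_sdiff_biUnion_ssubset h1
  have hG : ∀ j, IsBlockCone (Ihat j) (G j) := fun j => ⟨hGopen j, hGconv j, hGcone j, hGne j,
    hG0 j, fun _ _ h => propext (hGdep j _ _ h), hGproper j⟩
  have happrox := fun P z => mem_closure_biInter_of_nonstrict (P := P) (z := z) hdisj
    (fun k => hIhat k ▸ Finset.sdiff_subset) hG hWconv hWopen (fun _ _ h => propext (hWdep _ _ h))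
    hU hε hV
  have hclosureV : ∀ j, closure (V j) = {z | z ∈ closure U ∧ z ∈ closure (G j) ∧
      ∀ β, I β ⊂ I j → ‖blockProj (Ihat β) z‖ ≤ ε * ‖blockProj (Ihat j) z‖} := by
    intro j
    refine (closure_minimal (fun x hx => ?_) ?_).antisymm fun z hz => ?_
    · rw [hV j] at hx
      exact ⟨subset_closure hx.1, subset_closure hx.2.1, fun β hβ => (hx.2.2 β hβ).le⟩
    · simp only [ofPred_and, ofPred_forall, ofPred_mem_eq]
      exact isClosed_closure.inter (isClosed_closure.inter (isClosed_iInter fun β =>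
        isClosed_iInter fun _ => isClosed_le (by fun_prop) (by fun_prop)))
    · simpa using happrox {j} z hz.1 (by simpa using hz.2.1) (by simpa using hz.2.2)
  refine ⟨(subset_iInter fun j => closure_mono (hS ▸ iInter_subset V j)).antisymm
    fun z hz => ?_, hclosureV⟩
  rcases isEmpty_or_nonempty (Fin ℓ) with hℓ | ⟨⟨j₀⟩⟩
  · simp [hS]
  · simp only [mem_iInter, hclosureV] at hz
    simpa [hS] using happrox univ z (hz j₀).1 (fun j _ => (hz j).2.1) fun j _ => (hz j).2.2

/-- Lemma 7.2: `closure S = closure V₁ ∩ ⋯ ∩ closure V_ℓ`, and each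
`closure (V j)` is `{z ∈ closure U : z ∈ closure (G j), |z_{Î β}| ≤ ε |z_{Î j}| for I β ⊊ I j}`. -/
theorem stmt_6
    (n ℓ : ℕ) (I : Fin ℓ → Finset (Fin n))
    (h1 : ∀ j k, j ≠ k → I j ⊂ I k ∨ I k ⊂ I j ∨ Disjoint (I j) (I k))
    (h2 : ∀ j, (Finset.univ.filter (fun k => I k ⊂ I j)).biUnion I ⊂ I j)
    (Ihat : Fin ℓ → Finset (Fin n))
    (hIhat : ∀ j, Ihat j = I j \ (Finset.univ.filter (fun k => I k ⊂ I j)).biUnion I)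
    (nrm : Finset (Fin n) → (Fin n → ℂ) → ℝ)
    (hnrm : ∀ A z, nrm A z = Real.sqrt (∑ i ∈ A, ‖z i‖ ^ 2))
    (G : Fin ℓ → Set (Fin n → ℂ))
    (hGopen : ∀ j, IsOpen (G j))
    (hGconv : ∀ j, Convex ℝ (G j))
    (hGcone : ∀ j, ∀ z ∈ G j, ∀ c : ℝ, 0 < c → c • z ∈ G j)
    (hGne : ∀ j, (G j).Nonempty)
    (hG0 : ∀ j, (0 : Fin n → ℂ) ∉ G j)
    (hGdep : ∀ j, ∀ z w : Fin n → ℂ, (∀ i ∈ Ihat j, z i = w i) → (z ∈ G j ↔ w ∈ G j))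
    (hGproper : ∀ j, ∀ z, z ∈ closure (G j) → -z ∈ closure (G j) → ∀ i ∈ Ihat j, z i = 0)
    (R : Fin ℓ → ℝ) (hR : ∀ j, 0 < R j)
    (W : Set (Fin n → ℂ)) (hWconv : Convex ℝ W) (hWopen : IsOpen W) (hWne : W.Nonempty)
    (hWdep : ∀ z w : Fin n → ℂ, (∀ i, (∀ j, i ∉ I j) → z i = w i) → (z ∈ W ↔ w ∈ W))
    (U : Set (Fin n → ℂ))
    (hU : U = {z | (∀ j, nrm (Ihat j) z < R j) ∧ z ∈ W})
    (ε : ℝ) (hε : 0 < ε)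
    (V : Fin ℓ → Set (Fin n → ℂ))
    (hV : ∀ j, V j = {z ∈ U | z ∈ G j ∧ ∀ β, I β ⊂ I j → nrm (Ihat β) z < ε * nrm (Ihat j) z})
    (S : Set (Fin n → ℂ)) (hS : S = ⋂ j, V j)
    : closure S = ⋂ j, closure (V j) ∧
      ∀ j, closure (V j) =
        {z | z ∈ closure U ∧ z ∈ closure (G j) ∧
          ∀ β, I β ⊂ I j → nrm (Ihat β) z ≤ ε * nrm (Ihat j) z} :=
  stmt_6_general n ℓ I h1 Ihat hIhat nrm hnrm G hGopen hGconv hGcone hGne hG0 hGdep hGproper R W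
    hWconv hWopen hWdep U hU ε hε V hV S hS
end

section
/- Let $S=S(U,\{G_j\},\epsilon)$ be a proper multi-cone in $\mathbb{C}^n$ and for $J\subseteq\{1,\dots,\ell\}$ nonempty set $Z_J=\bigcap_{j\in J}Z_j$, $S_J=\mathrm{Int}_{Z_J}(\overline S\cap Z_J)$. Then $S_J=S(U\cap Z_J,\{G_j\}_{j\in J^*},\epsilon)$ is a nonempty open proper multi-cone in $Z_J$ for the family of submanifolds $\{Z_j\cap Z_J\}_{j\in J^*}$, where $J^*=\{j: I_j\not\subseteq I_J\}$ and $I_J=\bigcup_{j\in J}I_j$; moreover $I_j^*:=I_j\setminus I_J$ ($j\in J^*$) again satisfies conditions (1.2). -/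
/-!
Write `K = ⋃_{j ∈ J} I_j`. Because the `I_j` are nested or disjoint, the core `Î_j` of an index
`j ∈ J*` is disjoint from `K`, while `Î_k ⊆ K` for `k ∉ J*`; and strict inclusion among the
`I_j \ K`, `j ∈ J*`, is strict inclusion among the `I_j`.

A point `z` of the restricted multi-cone lies in `closure S`: it vanishes on the cores `Î_k ⊆ K`,
and adding `t p`, where `p` lies in every `G_k` with `|p|_{Î_k} = δ ^ #I_kᶜ` on those cores
(`0 < δ < ε`, `δ ≤ 1`), restores the conditions indexed by these `k` for small `t > 0` without spoiling
the others. As the restricted multi-cone is open in `Z_K`, it lies in `S_J`. Conversely, let `x`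
be in `S_J`. The sets `G_j` (`j ∈ J*`) and `W` depend only on coordinates that may vary inside
`Z_K`, so `x` is interior to their closures, hence in them by convexity. Each non-strict
inequality that `x` inherits from `closure S` is strict, because dilating `x` on a single core
stays inside `Z_K` near `x`. Finally, zeroing the `K`-coordinates maps `S` into the restricted
multi-cone, and `S` is nonempty by the perturbation argument with all cores.
-/

open Filter Topology Function

variable {ι α E : Type*}

lemma pow_lt_mul_pow {δ ε : ℝ} (hδ0 : 0 < δ) (hδ1 : δ ≤ 1) (hδε : δ < ε) {a b : ℕ}
    (hab : b < a) : δ ^ a < ε * δ ^ b :=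
  calc δ ^ a ≤ δ ^ (b + 1) := pow_le_pow_of_le_one hδ0.le hδ1 hab
    _ = δ ^ b * δ := pow_succ δ b
    _ < δ ^ b * ε := mul_lt_mul_of_pos_left hδε (pow_pos hδ0 b)
    _ = ε * δ ^ b := mul_comm _ _

lemma lt_of_one_add_mul_le {a c s : ℝ} (ha : 0 ≤ a) (hc : 0 < c) (hs : 0 < s)
    (h : (1 + s) * a ≤ c) : a < c := by
  rcases ha.eq_or_lt with rfl | ha
  · exact hc
  · nlinarith

section Combinatorics

variable [Fintype ι] [DecidableEq α] {I : ι → Finset α}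

def NestedOrDisjoint (I : ι → Finset α) : Prop :=
  ∀ j k, j ≠ k → I j ⊂ I k ∨ I k ⊂ I j ∨ Disjoint (I j) (I k)

/-- The paper's `Î_j`. -/
def core (I : ι → Finset α) (j : ι) : Finset α :=
  I j \ (Finset.univ.filter fun k => I k ⊂ I j).biUnion I

lemma core_subset (j : ι) : core I j ⊆ I j := Finset.sdiff_subset

lemma core_nonempty {j : ι} (h : (Finset.univ.filter fun k => I k ⊂ I j).biUnion I ⊂ I j) :
    (core I j).Nonempty :=
  Finset.sdiff_nonempty.2 h.not_subset

lemma disjoint_core_of_ssubset {j k : ι} (h : I k ⊂ I j) : Disjoint (I k) (core I j) :=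
  Finset.disjoint_sdiff.mono_left <| Finset.subset_biUnion_of_mem I <| by simpa using h

namespace NestedOrDisjoint

variable (hI : NestedOrDisjoint I)
include hI

lemma pairwise_disjoint_core : Pairwise (Disjoint on core I) := by
  intro j k hjk
  rcases hI j k hjk with h | h | h
  · exact (disjoint_core_of_ssubset h).mono_left (core_subset j)
  · exact ((disjoint_core_of_ssubset h).mono_left (core_subset k)).symm
  · exact h.mono (core_subset j) (core_subset k)

lemma disjoint_core_biUnion {J : Finset ι} {j : ι} (hj : ¬ I j ⊆ J.biUnion I) :
    Disjoint (core I j) (J.biUnion I) := by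
  refine (Finset.disjoint_biUnion_right _ _ _).2 fun k hk => ?_
  have hjk : j ≠ k := by rintro rfl; exact hj (Finset.subset_biUnion_of_mem I hk)
  rcases hI j k hjk with h | h | h
  · exact absurd (h.subset.trans (Finset.subset_biUnion_of_mem I hk)) hj
  · exact (disjoint_core_of_ssubset h).symm
  · exact h.mono_left (core_subset j)

variable (hcore : ∀ j, (core I j).Nonempty)
include hcore

lemma sdiff_ssubset_sdiff {J : Finset ι} {j k : ι} (hk : ¬ I k ⊆ J.biUnion I)
    (h : I j ⊂ I k) : I j \ J.biUnion I ⊂ I k \ J.biUnion I := by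
  refine (Finset.ssubset_iff_of_subset (Finset.sdiff_subset_sdiff h.subset le_rfl)).2 ?_
  obtain ⟨i, hi⟩ := hcore k
  refine ⟨i, Finset.mem_sdiff.2 ⟨core_subset k hi, ?_⟩, fun hij => ?_⟩
  · exact Finset.disjoint_left.1 (hI.disjoint_core_biUnion hk) hi
  · exact Finset.disjoint_left.1 (disjoint_core_of_ssubset h) (Finset.mem_sdiff.1 hij).1 hi

lemma sdiff_ssubset_sdiff_iff {J : Finset ι} {j k : ι} (hj : ¬ I j ⊆ J.biUnion I)
    (hk : ¬ I k ⊆ J.biUnion I) : I j \ J.biUnion I ⊂ I k \ J.biUnion I ↔ I j ⊂ I k := by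
  refine ⟨fun h => ?_, hI.sdiff_ssubset_sdiff hcore hk⟩
  obtain ⟨i, hi⟩ := Finset.sdiff_nonempty.2 hj
  have hjk : j ≠ k := by rintro rfl; exact h.ne rfl
  rcases hI j k hjk with h' | h' | h'
  · exact h'
  · exact absurd h (hI.sdiff_ssubset_sdiff hcore hj h').asymm
  · exact absurd (Finset.mem_sdiff.1 (h.subset hi)).1
      (Finset.disjoint_left.1 h' (Finset.mem_sdiff.1 hi).1)

lemma sdiff_biUnion (J : Finset ι) :
    ∀ j k, j ≠ k → ¬ I j ⊆ J.biUnion I → ¬ I k ⊆ J.biUnion I →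
      I j \ J.biUnion I ⊂ I k \ J.biUnion I ∨ I k \ J.biUnion I ⊂ I j \ J.biUnion I ∨
        Disjoint (I j \ J.biUnion I) (I k \ J.biUnion I) := by
  intro j k hjk hj hk
  rcases hI j k hjk with h | h | h
  · exact Or.inl (hI.sdiff_ssubset_sdiff hcore hk h)
  · exact Or.inr (Or.inl (hI.sdiff_ssubset_sdiff hcore hj h))
  · exact Or.inr (Or.inr (h.mono Finset.sdiff_subset Finset.sdiff_subset))

lemma biUnion_sdiff_ssubset {J : Finset ι} {j : ι} (hj : ¬ I j ⊆ J.biUnion I) :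
    (Finset.univ.filter fun k => ¬ I k ⊆ J.biUnion I ∧ I k \ J.biUnion I ⊂ I j \ J.biUnion I
      ).biUnion (fun k => I k \ J.biUnion I) ⊂ I j \ J.biUnion I := by
  refine (Finset.ssubset_iff_of_subset (Finset.biUnion_subset.2 fun k hk =>
    (Finset.mem_filter.1 hk).2.2.subset)).2 ?_
  obtain ⟨i, hi⟩ := hcore j
  refine ⟨i, Finset.mem_sdiff.2 ⟨core_subset j hi, ?_⟩, fun hmem => ?_⟩
  · exact Finset.disjoint_left.1 (hI.disjoint_core_biUnion hj) hi
  obtain ⟨k, hk, hik⟩ := Finset.mem_biUnion.1 hmem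
  obtain ⟨-, hkJ, hkj⟩ := Finset.mem_filter.1 hk
  have hkj' : I k ⊂ I j := (hI.sdiff_ssubset_sdiff_iff hcore hkJ hj).1 hkj
  exact Finset.disjoint_left.1 (disjoint_core_of_ssubset hkj') (Finset.mem_sdiff.1 hik).1 hi

end NestedOrDisjoint

end Combinatorics

section RestrictNorm

variable [NormedAddCommGroup E] {A : Finset α} {z w : α → E}

noncomputable def restrictNorm (A : Finset α) (z : α → E) : ℝ := √(∑ i ∈ A, ‖z i‖ ^ 2)

lemma restrictNorm_nonneg : 0 ≤ restrictNorm A z := Real.sqrt_nonneg _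

lemma restrictNorm_congr (h : ∀ i ∈ A, z i = w i) : restrictNorm A z = restrictNorm A w := by
  unfold restrictNorm
  rw [Finset.sum_congr rfl fun i hi => by rw [h i hi]]

lemma restrictNorm_eq_zero : restrictNorm A z = 0 ↔ ∀ i ∈ A, z i = 0 := by
  simp [restrictNorm, Real.sqrt_eq_zero (Finset.sum_nonneg fun i _ => sq_nonneg ‖z i‖),
    Finset.sum_eq_zero_iff_of_nonneg fun i _ => sq_nonneg ‖z i‖]

lemma restrictNorm_smul [NormedSpace ℝ E] (r : ℝ) :
    restrictNorm A (r • z) = |r| * restrictNorm A z := by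
  simp only [restrictNorm, Pi.smul_apply, norm_smul, Real.norm_eq_abs, mul_pow, sq_abs,
    ← Finset.mul_sum, Real.sqrt_mul (sq_nonneg r), Real.sqrt_sq_eq_abs]

lemma continuous_restrictNorm : Continuous (restrictNorm (E := E) A) := by
  unfold restrictNorm
  fun_prop

lemma restrictNorm_piecewise_zero_le [DecidableEq α] (K : Finset α) :
    restrictNorm A (K.piecewise 0 z) ≤ restrictNorm A z := by
  refine Real.sqrt_le_sqrt (Finset.sum_le_sum fun i _ => ?_)
  by_cases hi : i ∈ K <;> simp [hi]

lemma restrictNorm_piecewise_self [DecidableEq α] (y : α → E) :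
    restrictNorm A (A.piecewise y z) = restrictNorm A y :=
  restrictNorm_congr fun _ hi => Finset.piecewise_eq_of_mem _ _ _ hi

lemma restrictNorm_piecewise_of_disjoint [DecidableEq α] {B : Finset α} (h : Disjoint B A)
    (y : α → E) : restrictNorm A (B.piecewise y z) = restrictNorm A z :=
  restrictNorm_congr fun _ hi => Finset.piecewise_eq_of_notMem _ _ _ (Finset.disjoint_right.1 h hi)

lemma restrictNorm_pos_of_mem {G : Set (α → E)} (hG0 : 0 ∉ G) (hdep : DependsOn (· ∈ G) A)
    (hz : z ∈ G) : 0 < restrictNorm A z :=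
  restrictNorm_nonneg.lt_of_ne fun h =>
    hG0 <| (hdep fun i hi => restrictNorm_eq_zero.1 h.symm i hi).mp hz

lemma exists_mem_restrictNorm_eq [NormedSpace ℝ E] {G : Set (α → E)} (hne : G.Nonempty)
    (hcone : ∀ z ∈ G, ∀ c : ℝ, 0 < c → c • z ∈ G) (hG0 : 0 ∉ G) (hdep : DependsOn (· ∈ G) A)
    {r : ℝ} (hr : 0 < r) : ∃ g ∈ G, restrictNorm A g = r := by
  obtain ⟨g, hg⟩ := hne
  have hpos := restrictNorm_pos_of_mem hG0 hdep hg
  refine ⟨(r / restrictNorm A g) • g, hcone g hg _ (by positivity), ?_⟩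
  rw [restrictNorm_smul, abs_of_pos (by positivity), div_mul_cancel₀ _ hpos.ne']

end RestrictNorm

section Topology

variable [NormedAddCommGroup E]

lemma DependsOn.mem_closure_s8 {G : Set (α → E)} {A : Set α} (h : DependsOn (· ∈ G) A) :
    DependsOn (· ∈ closure G) A := by
  intro x y hxy
  have hG : Homeomorph.addRight (y - x) ⁻¹' G = G :=
    Set.ext fun u => Iff.of_eq (h fun i hi => by simp [hxy i hi])
  have hcl := (Homeomorph.addRight (y - x)).preimage_closure G
  rw [hG] at hcl
  simpa using (Set.ext_iff.1 hcl x).symm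

lemma Convex.mem_of_forall_near_mem_closure [Fintype α] [NormedSpace ℝ E] {G : Set (α → E)}
    {A : Set α} (hGo : IsOpen G) (hGc : Convex ℝ G) (hdep : DependsOn (· ∈ G) A) {x : α → E}
    {δ : ℝ} (hδ : 0 < δ) (hx : ∀ v, (∀ i ∉ A, v i = x i) → dist v x < δ → v ∈ closure G) :
    x ∈ G := by
  classical
  have hball : Metric.ball x δ ⊆ closure G := by
    intro w hw
    set w' : α → E := fun i => if i ∈ A then w i else x i
    have hw' : w' ∈ closure G := by
      refine hx w' (fun i hi => if_neg hi) ((dist_pi_lt_iff hδ).2 fun i => ?_)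
      by_cases hi : i ∈ A
      · simpa [w', hi] using (dist_le_pi_dist w x i).trans_lt hw
      · simpa [w', hi] using hδ
    exact (hdep.mem_closure_s8 fun i hi => if_pos hi).mp hw'
  have hint : x ∈ interior (closure G) :=
    mem_interior_iff_mem_nhds.2 (mem_of_superset (Metric.ball_mem_nhds x hδ) hball)
  have hne : (interior G).Nonempty := by
    rw [hGo.interior_eq]
    exact closure_nonempty_iff.1 ⟨x, interior_subset hint⟩
  rwa [hGc.interior_closure_eq_interior_of_nonempty_interior hne, hGo.interior_eq] at hint

lemma exists_forall_dist_lt_of_mem_interior {X : Type*} [PseudoMetricSpace X] {p : X → Prop}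
    {s : Set X} {x : Subtype p} (hx : x ∈ interior {y : Subtype p | ↑y ∈ s}) :
    ∃ δ > 0, ∀ v, p v → dist v x < δ → v ∈ s := by
  obtain ⟨δ, hδ, hball⟩ := Metric.mem_nhds_iff.1 (mem_interior_iff_mem_nhds.1 hx)
  exact ⟨δ, hδ, fun v hv hd => hball (show dist (⟨v, hv⟩ : Subtype p) x < δ from hd)⟩

lemma exists_pos_piecewise_smul_mem [Fintype α] [DecidableEq α] [NormedSpace ℝ E]
    {K : Finset α} {C : Set (α → E)} {x : α → E} (hx : ∀ i ∈ K, x i = 0) {δ : ℝ} (hδ : 0 < δ)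
    (hnear : ∀ v, (∀ i ∈ K, v i = 0) → dist v x < δ → v ∈ C) (B : Finset α) :
    ∃ s : ℝ, 0 < s ∧ B.piecewise ((1 + s) • x) x ∈ C := by
  have hcont : Continuous fun s : ℝ => B.piecewise ((1 + s) • x) x := continuous_pi fun i => by
    by_cases hi : i ∈ B
    · simp only [Finset.piecewise_eq_of_mem _ _ _ hi]; fun_prop
    · simp only [Finset.piecewise_eq_of_notMem _ _ _ hi]; fun_prop
  have hnear0 : ∀ᶠ s in 𝓝[>] (0 : ℝ), dist (B.piecewise ((1 + s) • x) x) x < δ := by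
    have h := hcont.tendsto 0
    simp only [add_zero, one_smul, Finset.piecewise_same] at h
    exact (h.mono_left nhdsWithin_le_nhds).eventually (Metric.ball_mem_nhds x hδ)
  obtain ⟨s, hs, hd⟩ := (eventually_mem_nhdsWithin.and hnear0).exists
  refine ⟨s, hs, hnear _ (fun i hi => ?_) hd⟩
  by_cases hiB : i ∈ B <;> simp [hiB, hx i hi]

end Topology

section MultiCone

variable [Fintype ι] [DecidableEq α] [NormedAddCommGroup E]
  {I : ι → Finset α} {G : ι → Set (α → E)} {R : ι → ℝ} {W : Set (α → E)} {ε : ℝ}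

/-- The paper's `U`. -/
def multiConeBase (I : ι → Finset α) (R : ι → ℝ) (W : Set (α → E)) : Set (α → E) :=
  {z | (∀ j, restrictNorm (core I j) z < R j) ∧ z ∈ W}

/-- `S(U, {G_j}, ε)`, the intersection of the sets `V_j`. -/
def multiCone (I : ι → Finset α) (G : ι → Set (α → E)) (R : ι → ℝ) (W : Set (α → E)) (ε : ℝ) :
    Set (α → E) :=
  ⋂ j, {z ∈ multiConeBase I R W | z ∈ G j ∧
    ∀ β, I β ⊂ I j → restrictNorm (core I β) z < ε * restrictNorm (core I j) z}

/-- `S(U ∩ Z_K, {G_j}_{j ∈ J*}, ε)` for the family `I_j \ K`, where `J* = {j | ¬ I j ⊆ K}`. -/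
def restrictedMultiCone (I : ι → Finset α) (G : ι → Set (α → E)) (R : ι → ℝ) (W : Set (α → E))
    (ε : ℝ) (K : Finset α) : Set (α → E) :=
  {z | (∀ i ∈ K, z i = 0) ∧ z ∈ multiConeBase I R W ∧ ∀ j, ¬ I j ⊆ K → z ∈ G j ∧
    ∀ β, ¬ I β ⊆ K → I β \ K ⊂ I j \ K → restrictNorm (core I β) z < ε * restrictNorm (core I j) z}

lemma mem_multiCone [Nonempty ι] {z : α → E} :
    z ∈ multiCone I G R W ε ↔ z ∈ multiConeBase I R W ∧ ∀ j, z ∈ G j ∧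
      ∀ β, I β ⊂ I j → restrictNorm (core I β) z < ε * restrictNorm (core I j) z := by
  simp only [multiCone, Set.mem_iInter, Set.mem_ofPred_eq, forall_and_left]

lemma restrictNorm_le_of_mem_closure_multiCone {z : α → E}
    (hz : z ∈ closure (multiCone I G R W ε)) (k : ι) : restrictNorm (core I k) z ≤ R k :=
  closure_minimal (fun _ hy => ((Set.mem_iInter.1 hy k).1.1 k).le)
    (isClosed_le continuous_restrictNorm continuous_const) hz

lemma restrictNorm_le_mul_of_mem_closure_multiCone {z : α → E}
    (hz : z ∈ closure (multiCone I G R W ε)) {β j : ι} (h : I β ⊂ I j) :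
    restrictNorm (core I β) z ≤ ε * restrictNorm (core I j) z :=
  closure_minimal (fun _ hy => ((Set.mem_iInter.1 hy j).2.2 β h).le)
    (isClosed_le continuous_restrictNorm (continuous_const.mul continuous_restrictNorm)) hz

lemma closure_multiCone_subset_closure_cone (j : ι) :
    closure (multiCone I G R W ε) ⊆ closure (G j) :=
  closure_mono fun _ hy => (Set.mem_iInter.1 hy j).2.1

lemma closure_multiCone_subset_closure_base [Nonempty ι] :
    closure (multiCone I G R W ε) ⊆ closure W :=
  closure_mono fun _ hy => (Set.mem_iInter.1 hy (Classical.arbitrary ι)).1.2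

lemma isOpen_restrictedMultiCone (hGopen : ∀ j, IsOpen (G j)) (hWopen : IsOpen W)
    (K : Finset α) :
    IsOpen {z : {w : α → E // ∀ i ∈ K, w i = 0} | ↑z ∈ restrictedMultiCone I G R W ε K} := by
  have hlt : ∀ β j,
      IsOpen {z : α → E | restrictNorm (core I β) z < ε * restrictNorm (core I j) z} :=
    fun β j => isOpen_lt continuous_restrictNorm (continuous_const.mul continuous_restrictNorm)
  have hO : IsOpen {z : α → E | z ∈ multiConeBase I R W ∧ ∀ j, ¬ I j ⊆ K → z ∈ G j ∧
      ∀ β, ¬ I β ⊆ K → I β \ K ⊂ I j \ K →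
        restrictNorm (core I β) z < ε * restrictNorm (core I j) z} := by
    simp only [multiConeBase, Set.ofPred_and, Set.ofPred_forall, Set.ofPred_mem_eq]
    exact ((isOpen_iInter_of_finite fun k => isOpen_lt continuous_restrictNorm
      continuous_const).inter hWopen).inter (isOpen_iInter_of_finite fun j =>
        isOpen_iInter_of_finite fun _ => (hGopen j).inter (isOpen_iInter_of_finite fun β =>
          isOpen_iInter_of_finite fun _ => isOpen_iInter_of_finite fun _ => hlt β j))
  convert hO.preimage continuous_subtype_val using 1
  ext z
  exact and_iff_right z.2

lemma piecewise_zero_mem_restrictedMultiCone [Nonempty ι] (hI : NestedOrDisjoint I)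
    (hcore : ∀ j, (core I j).Nonempty) (hGdep : ∀ j, DependsOn (· ∈ G j) (core I j))
    (hWdep : DependsOn (· ∈ W) {i | ∀ j, i ∉ I j}) {J : Finset ι} {y : α → E}
    (hy : y ∈ multiCone I G R W ε) :
    (J.biUnion I).piecewise (0 : α → E) y ∈ restrictedMultiCone I G R W ε (J.biUnion I) := by
  obtain ⟨⟨hyR, hyW⟩, hyG⟩ := mem_multiCone.1 hy
  set K := J.biUnion I
  have hcoreK : ∀ j, ¬ I j ⊆ K → ∀ i ∈ core I j, K.piecewise (0 : α → E) y i = y i :=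
    fun j hj i hi => Finset.piecewise_eq_of_notMem _ _ _
      (Finset.disjoint_left.1 (hI.disjoint_core_biUnion hj) hi)
  refine ⟨fun i hi => Finset.piecewise_eq_of_mem _ _ _ hi,
    ⟨fun k => (restrictNorm_piecewise_zero_le K).trans_lt (hyR k), (hWdep fun i hi => ?_).mpr hyW⟩,
    fun j hj => ⟨(hGdep j (hcoreK j hj)).mpr (hyG j).1, fun β hβ hβj => ?_⟩⟩
  · refine Finset.piecewise_eq_of_notMem _ _ _ fun hiK => ?_
    obtain ⟨k, -, hik⟩ := Finset.mem_biUnion.1 hiK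
    exact hi k hik
  · rw [restrictNorm_congr (hcoreK j hj)]
    exact (restrictNorm_piecewise_zero_le K).trans_lt
      ((hyG j).2 β ((hI.sdiff_ssubset_sdiff_iff hcore hβ hj).1 hβj))

lemma mem_restrictedMultiCone_of_mem_interior [Fintype α] [NormedSpace ℝ E] [Nonempty ι]
    (hI : NestedOrDisjoint I) (hcore : ∀ j, (core I j).Nonempty) (hε : 0 < ε)
    (hR : ∀ j, 0 < R j) (hGopen : ∀ j, IsOpen (G j)) (hGconv : ∀ j, Convex ℝ (G j))
    (hG0 : ∀ j, (0 : α → E) ∉ G j) (hGdep : ∀ j, DependsOn (· ∈ G j) (core I j))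
    (hWopen : IsOpen W) (hWconv : Convex ℝ W) (hWdep : DependsOn (· ∈ W) {i | ∀ j, i ∉ I j})
    {J : Finset ι} {x : {w : α → E // ∀ i ∈ J.biUnion I, w i = 0}}
    (hx : x ∈ interior {z : {w : α → E // ∀ i ∈ J.biUnion I, w i = 0} |
      ↑z ∈ closure (multiCone I G R W ε)}) :
    ↑x ∈ restrictedMultiCone I G R W ε (J.biUnion I) := by
  obtain ⟨δ, hδ, hnear⟩ := exists_forall_dist_lt_of_mem_interior hx
  have hslice : ∀ A : Set α, (∀ i ∈ J.biUnion I, i ∉ A) → ∀ v : α → E,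
      (∀ i ∉ A, v i = (x : α → E) i) → dist v x < δ → v ∈ closure (multiCone I G R W ε) :=
    fun A hA v hv hd => hnear v (fun i hi => (hv i (hA i hi)).trans (x.2 i hi)) hd
  have hG : ∀ j, ¬ I j ⊆ J.biUnion I → ↑x ∈ G j := fun j hj =>
    (hGconv j).mem_of_forall_near_mem_closure (hGopen j) (hGdep j) hδ fun v hv hd =>
      closure_multiCone_subset_closure_cone j <| hslice _ (fun i hi hij =>
        Finset.disjoint_left.1 (hI.disjoint_core_biUnion hj) hij hi) v hv hd
  have hW : ↑x ∈ W :=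
    hWconv.mem_of_forall_near_mem_closure hWopen hWdep hδ fun v hv hd =>
      closure_multiCone_subset_closure_base <| hslice {i | ∀ j, i ∉ I j} (fun i hi hiA => by
        obtain ⟨k, -, hik⟩ := Finset.mem_biUnion.1 hi
        exact hiA k hik) v hv hd
  have hdilate := exists_pos_piecewise_smul_mem x.2 hδ hnear
  refine ⟨x.2, ⟨fun k => ?_, hW⟩, fun j hj => ⟨hG j hj, fun β hβ hβj => ?_⟩⟩
  · obtain ⟨s, hs, hmem⟩ := hdilate (core I k)
    have h := restrictNorm_le_of_mem_closure_multiCone hmem k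
    rw [restrictNorm_piecewise_self, restrictNorm_smul, abs_of_pos (by positivity)] at h
    exact lt_of_one_add_mul_le restrictNorm_nonneg (hR k) hs h
  · have hβj' := (hI.sdiff_ssubset_sdiff_iff hcore hβ hj).1 hβj
    have hβne : β ≠ j := by rintro rfl; exact hβj'.ne rfl
    obtain ⟨s, hs, hmem⟩ := hdilate (core I β)
    have h := restrictNorm_le_mul_of_mem_closure_multiCone hmem hβj'
    rw [restrictNorm_piecewise_self, restrictNorm_smul, abs_of_pos (by positivity),
      restrictNorm_piecewise_of_disjoint (hI.pairwise_disjoint_core hβne)] at h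
    exact lt_of_one_add_mul_le restrictNorm_nonneg
      (mul_pos hε (restrictNorm_pos_of_mem (hG0 j) (hGdep j) (hG j hj))) hs h

variable [NormedSpace ℝ E]

structure IsPerturbation (I : ι → Finset α) (G : ι → Set (α → E)) (ε : ℝ) (F : Finset ι)
    (p : α → E) : Prop where
  mem : ∀ k ∈ F, p ∈ G k
  restrictNorm_lt : ∀ β ∈ F, ∀ j ∈ F, I β ⊂ I j →
    restrictNorm (core I β) p < ε * restrictNorm (core I j) p
  eq_zero_of_notMem : ∀ k ∉ F, ∀ i ∈ core I k, p i = 0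
  eq_zero_of_forall_notMem : ∀ i, (∀ k, i ∉ I k) → p i = 0

lemma exists_isPerturbation [Fintype α] (hI : NestedOrDisjoint I) (hε : 0 < ε)
    (hGne : ∀ j, (G j).Nonempty) (hGcone : ∀ j, ∀ z ∈ G j, ∀ c : ℝ, 0 < c → c • z ∈ G j)
    (hG0 : ∀ j, (0 : α → E) ∉ G j) (hGdep : ∀ j, DependsOn (· ∈ G j) (core I j))
    (F : Finset ι) :
    ∃ p, IsPerturbation I G ε F p := by
  set δ := min (ε / 2) 1
  have hδ0 : 0 < δ := by positivity
  have hδε : δ < ε := (min_le_left _ _).trans_lt (half_lt_self hε)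
  -- a strictly smaller set has a strictly larger complement, so its weight is smaller by `δ < ε`
  choose g hgG hg using fun k => exists_mem_restrictNorm_eq (hGne k) (hGcone k) (hG0 k)
    (hGdep k) (pow_pos hδ0 (I k)ᶜ.card)
  set p : α → E := ∑ k ∈ F, (core I k).piecewise (g k) 0 with hpdef
  have hp : ∀ k ∈ F, ∀ i ∈ core I k, p i = g k i := by
    intro k hk i hi
    rw [hpdef, Finset.sum_apply, Finset.sum_eq_single_of_mem k hk fun k' _ hk' =>
      Finset.piecewise_eq_of_notMem _ _ _
        (Finset.disjoint_right.1 (hI.pairwise_disjoint_core hk') hi)]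
    exact Finset.piecewise_eq_of_mem _ _ _ hi
  have hp0 : ∀ i, (∀ k ∈ F, i ∉ core I k) → p i = 0 := fun i hi => by
    rw [hpdef, Finset.sum_apply]
    exact Finset.sum_eq_zero fun k hk => Finset.piecewise_eq_of_notMem _ _ _ (hi k hk)
  have hpnorm : ∀ k ∈ F, restrictNorm (core I k) p = δ ^ (I k)ᶜ.card :=
    fun k hk => (restrictNorm_congr (hp k hk)).trans (hg k)
  refine ⟨p, ⟨fun k hk => (hGdep k (hp k hk)).mpr (hgG k), fun β hβ j hj h => ?_,
    fun k hk i hi => hp0 i fun k' hk' hi' => ?_,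
    fun i hi => hp0 i fun k _ hik => hi k (core_subset k hik)⟩⟩
  · rw [hpnorm β hβ, hpnorm j hj]
    exact pow_lt_mul_pow hδ0 (min_le_right _ _) hδε
      (Finset.card_lt_card (Finset.compl_ssubset_compl.2 h))
  · exact Finset.disjoint_left.1
      (hI.pairwise_disjoint_core (ne_of_mem_of_not_mem hk' hk).symm) hi hi'

section Perturbation

variable {F : Finset ι} (hF : ∀ β j, I β ⊂ I j → j ∈ F → β ∈ F) {p : α → E}
  (hp : IsPerturbation I G ε F p) {z : α → E} (hzF : ∀ k ∈ F, ∀ i ∈ core I k, z i = 0)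
  (hzR : ∀ k ∉ F, restrictNorm (core I k) z < R k) (hzW : z ∈ W)
  (hzG : ∀ j ∉ F, z ∈ G j ∧
    ∀ β ∉ F, I β ⊂ I j → restrictNorm (core I β) z < ε * restrictNorm (core I j) z)
include hF hp hzF hzR hzW hzG

lemma IsPerturbation.add_smul_mem_multiCone
    (hGcone : ∀ j, ∀ z ∈ G j, ∀ c : ℝ, 0 < c → c • z ∈ G j)
    (hGdep : ∀ j, DependsOn (· ∈ G j) (core I j)) (hWdep : DependsOn (· ∈ W) {i | ∀ j, i ∉ I j})
    {t : ℝ} (ht : 0 < t) (htR : ∀ k, t * restrictNorm (core I k) p < R k)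
    (htε : ∀ β j, j ∉ F → t * restrictNorm (core I β) p < ε * restrictNorm (core I j) z) :
    z + t • p ∈ multiCone I G R W ε := by
  have hon : ∀ k ∈ F, ∀ i ∈ core I k, (z + t • p) i = (t • p) i :=
    fun k hk i hi => by simp [hzF k hk i hi]
  have hoff : ∀ k ∉ F, ∀ i ∈ core I k, (z + t • p) i = z i :=
    fun k hk i hi => by simp [hp.eq_zero_of_notMem k hk i hi]
  have hnormF : ∀ k ∈ F, restrictNorm (core I k) (z + t • p) = t * restrictNorm (core I k) p :=
    fun k hk => by rw [restrictNorm_congr (hon k hk), restrictNorm_smul, abs_of_pos ht]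
  have hW : z + t • p ∈ W :=
    (hWdep fun i hi => by simp [hp.eq_zero_of_forall_notMem i hi]).mpr hzW
  refine Set.mem_iInter.2 fun j => ⟨⟨fun k => ?_, hW⟩, ?_, fun β hβj => ?_⟩
  · by_cases hk : k ∈ F
    · rw [hnormF k hk]; exact htR k
    · rw [restrictNorm_congr (hoff k hk)]; exact hzR k hk
  · by_cases hj : j ∈ F
    · exact (hGdep j (hon j hj)).mpr (hGcone j p (hp.mem j hj) t ht)
    · exact (hGdep j (hoff j hj)).mpr (hzG j hj).1
  · by_cases hj : j ∈ F
    · rw [hnormF β (hF β j hβj hj), hnormF j hj, mul_left_comm]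
      exact mul_lt_mul_of_pos_left (hp.restrictNorm_lt β (hF β j hβj hj) j hj hβj) ht
    · rw [restrictNorm_congr (hoff j hj)]
      by_cases hβ : β ∈ F
      · rw [hnormF β hβ]; exact htε β j hj
      · rw [restrictNorm_congr (hoff β hβ)]; exact (hzG j hj).2 β hβ hβj

lemma IsPerturbation.eventually_add_smul_mem_multiCone (hε : 0 < ε) (hR : ∀ j, 0 < R j)
    (hGcone : ∀ j, ∀ z ∈ G j, ∀ c : ℝ, 0 < c → c • z ∈ G j) (hG0 : ∀ j, (0 : α → E) ∉ G j)
    (hGdep : ∀ j, DependsOn (· ∈ G j) (core I j)) (hWdep : DependsOn (· ∈ W) {i | ∀ j, i ∉ I j}) :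
    ∀ᶠ t in 𝓝[>] (0 : ℝ), z + t • p ∈ multiCone I G R W ε := by
  have hsmall : ∀ a b : ℝ, 0 < b → ∀ᶠ t in 𝓝[>] (0 : ℝ), t * a < b := fun a b hb =>
    ((continuous_mul_const a).tendsto' 0 0 (zero_mul a)).mono_left nhdsWithin_le_nhds
      |>.eventually_lt_const hb
  have htε : ∀ᶠ t in 𝓝[>] (0 : ℝ), ∀ β j, j ∉ F →
      t * restrictNorm (core I β) p < ε * restrictNorm (core I j) z := by
    refine eventually_all.2 fun β => eventually_all.2 fun j => ?_
    by_cases hj : j ∈ F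
    · exact Eventually.of_forall fun _ h => absurd hj h
    · have hpos := restrictNorm_pos_of_mem (hG0 j) (hGdep j) (hzG j hj).1
      exact (hsmall _ _ (mul_pos hε hpos)).mono fun _ h _ => h
  filter_upwards [eventually_mem_nhdsWithin, eventually_all.2 fun k => hsmall _ _ (hR k), htε]
    with t ht htR htε
  exact hp.add_smul_mem_multiCone hF hzF hzR hzW hzG hGcone hGdep hWdep ht htR htε

end Perturbation

lemma multiCone_nonempty [Fintype α] (hI : NestedOrDisjoint I) (hε : 0 < ε) (hR : ∀ j, 0 < R j)
    (hGne : ∀ j, (G j).Nonempty) (hGcone : ∀ j, ∀ z ∈ G j, ∀ c : ℝ, 0 < c → c • z ∈ G j)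
    (hG0 : ∀ j, (0 : α → E) ∉ G j) (hGdep : ∀ j, DependsOn (· ∈ G j) (core I j))
    (hWne : W.Nonempty) (hWdep : DependsOn (· ∈ W) {i | ∀ j, i ∉ I j}) :
    (multiCone I G R W ε).Nonempty := by
  obtain ⟨b, hb⟩ := hWne
  set K := Finset.univ.biUnion I
  have hbW : K.piecewise (0 : α → E) b ∈ W :=
    (hWdep fun i hi => Finset.piecewise_eq_of_notMem _ _ _ (by simpa [K] using hi)).mpr hb
  have hbK : ∀ k ∈ Finset.univ, ∀ i ∈ core I k, K.piecewise (0 : α → E) b i = 0 := fun k hk i hi =>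
    Finset.piecewise_eq_of_mem _ _ _ (Finset.subset_biUnion_of_mem I hk (core_subset k hi))
  obtain ⟨p, hp⟩ := exists_isPerturbation hI hε hGne hGcone hG0 hGdep Finset.univ
  have hev := hp.eventually_add_smul_mem_multiCone (fun _ _ _ _ => Finset.mem_univ _) hbK
    (fun k hk => absurd (Finset.mem_univ k) hk) hbW (fun j hj => absurd (Finset.mem_univ j) hj)
    hε hR hGcone hG0 hGdep hWdep
  exact ⟨_, hev.exists.choose_spec⟩

lemma restrictedMultiCone_subset_closure_multiCone [Fintype α] (hI : NestedOrDisjoint I)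
    (hcore : ∀ j, (core I j).Nonempty) (hε : 0 < ε) (hR : ∀ j, 0 < R j)
    (hGne : ∀ j, (G j).Nonempty) (hGcone : ∀ j, ∀ z ∈ G j, ∀ c : ℝ, 0 < c → c • z ∈ G j)
    (hG0 : ∀ j, (0 : α → E) ∉ G j) (hGdep : ∀ j, DependsOn (· ∈ G j) (core I j))
    (hWdep : DependsOn (· ∈ W) {i | ∀ j, i ∉ I j}) (J : Finset ι) :
    restrictedMultiCone I G R W ε (J.biUnion I) ⊆ closure (multiCone I G R W ε) := by
  rintro z ⟨hzK, ⟨hzR, hzW⟩, hzG⟩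
  set F := Finset.univ.filter fun k => I k ⊆ J.biUnion I
  have hF : ∀ β j, I β ⊂ I j → j ∈ F → β ∈ F := fun β j hβj hj => by
    simpa [F] using hβj.subset.trans (by simpa [F] using hj)
  have hzG' : ∀ j ∉ F, z ∈ G j ∧ ∀ β ∉ F, I β ⊂ I j →
      restrictNorm (core I β) z < ε * restrictNorm (core I j) z := fun j hj => by
    simp only [F, Finset.mem_filter, Finset.mem_univ, true_and] at hj ⊢
    exact ⟨(hzG j hj).1, fun β hβ hβj =>
      (hzG j hj).2 β hβ ((hI.sdiff_ssubset_sdiff_iff hcore hβ hj).2 hβj)⟩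
  obtain ⟨p, hp⟩ := exists_isPerturbation hI hε hGne hGcone hG0 hGdep F
  have hev := hp.eventually_add_smul_mem_multiCone hF
    (fun k hk i hi => hzK i ((Finset.mem_filter.1 hk).2 (core_subset k hi)))
    (fun k _ => hzR k) hzW hzG' hε hR hGcone hG0 hGdep hWdep
  have htend : Tendsto (fun t : ℝ => z + t • p) (𝓝[>] 0) (𝓝 z) := by
    have h : Continuous fun t : ℝ => z + t • p := by fun_prop
    simpa using (h.tendsto 0).mono_left nhdsWithin_le_nhds
  exact mem_closure_of_tendsto htend hev

theorem image_interior_closure_multiCone [Fintype α] [Nonempty ι] (hI : NestedOrDisjoint I)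
    (hcore : ∀ j, (core I j).Nonempty) (hε : 0 < ε) (hR : ∀ j, 0 < R j)
    (hGopen : ∀ j, IsOpen (G j)) (hGconv : ∀ j, Convex ℝ (G j)) (hGne : ∀ j, (G j).Nonempty)
    (hGcone : ∀ j, ∀ z ∈ G j, ∀ c : ℝ, 0 < c → c • z ∈ G j) (hG0 : ∀ j, (0 : α → E) ∉ G j)
    (hGdep : ∀ j, DependsOn (· ∈ G j) (core I j)) (hWopen : IsOpen W) (hWconv : Convex ℝ W)
    (hWdep : DependsOn (· ∈ W) {i | ∀ j, i ∉ I j}) (J : Finset ι) :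
    Subtype.val '' interior {z : {w : α → E // ∀ i ∈ J.biUnion I, w i = 0} |
      ↑z ∈ closure (multiCone I G R W ε)} = restrictedMultiCone I G R W ε (J.biUnion I) := by
  refine subset_antisymm ?_ fun z hz => ⟨⟨z, hz.1⟩, ?_, rfl⟩
  · rintro _ ⟨x, hx, rfl⟩
    exact mem_restrictedMultiCone_of_mem_interior hI hcore hε hR hGopen hGconv hG0 hGdep
      hWopen hWconv hWdep hx
  · exact interior_maximal
      (fun (y : {w : α → E // ∀ i ∈ J.biUnion I, w i = 0}) hy =>
        restrictedMultiCone_subset_closure_multiCone hI hcore hε hR hGne hGcone hG0 hGdep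
          hWdep J hy)
      (isOpen_restrictedMultiCone hGopen hWopen _) hz

end MultiCone

theorem stmt_8_general
    (n ℓ : ℕ) (I : Fin ℓ → Finset (Fin n))
    (h1 : ∀ j k, j ≠ k → I j ⊂ I k ∨ I k ⊂ I j ∨ Disjoint (I j) (I k))
    (h2 : ∀ j, (Finset.univ.filter (fun k => I k ⊂ I j)).biUnion I ⊂ I j)
    (Ihat : Fin ℓ → Finset (Fin n))
    (hIhat : ∀ j, Ihat j = I j \ (Finset.univ.filter (fun k => I k ⊂ I j)).biUnion I)
    (nrm : Finset (Fin n) → (Fin n → ℂ) → ℝ)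
    (hnrm : ∀ A z, nrm A z = Real.sqrt (∑ i ∈ A, ‖z i‖ ^ 2))
    (G : Fin ℓ → Set (Fin n → ℂ))
    (hGopen : ∀ j, IsOpen (G j))
    (hGconv : ∀ j, Convex ℝ (G j))
    (hGcone : ∀ j, ∀ z ∈ G j, ∀ c : ℝ, 0 < c → c • z ∈ G j)
    (hGne : ∀ j, (G j).Nonempty)
    (hG0 : ∀ j, (0 : Fin n → ℂ) ∉ G j)
    (hGdep : ∀ j, ∀ z w : Fin n → ℂ, (∀ i ∈ Ihat j, z i = w i) → (z ∈ G j ↔ w ∈ G j))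
    (R : Fin ℓ → ℝ) (hR : ∀ j, 0 < R j)
    (W : Set (Fin n → ℂ)) (hWconv : Convex ℝ W) (hWopen : IsOpen W) (hWne : W.Nonempty)
    (hWdep : ∀ z w : Fin n → ℂ, (∀ i, (∀ j, i ∉ I j) → z i = w i) → (z ∈ W ↔ w ∈ W))
    (U : Set (Fin n → ℂ))
    (hU : U = {z | (∀ j, nrm (Ihat j) z < R j) ∧ z ∈ W})
    (ε : ℝ) (hε : 0 < ε)
    (V : Fin ℓ → Set (Fin n → ℂ))
    (hV : ∀ j, V j = {z ∈ U | z ∈ G j ∧ ∀ β, I β ⊂ I j → nrm (Ihat β) z < ε * nrm (Ihat j) z})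
    (S : Set (Fin n → ℂ)) (hS : S = ⋂ j, V j)
    (J : Finset (Fin ℓ)) (hJne : J.Nonempty)
    (SJ : Set (Fin n → ℂ))
    (hSJ : SJ = Subtype.val ''
      interior {z : {w : Fin n → ℂ // ∀ i ∈ J.biUnion I, w i = 0} | (z : Fin n → ℂ) ∈ closure S})
    : SJ.Nonempty ∧
      SJ = {z | (∀ i ∈ J.biUnion I, z i = 0) ∧ z ∈ U ∧
        ∀ j, ¬ I j ⊆ J.biUnion I →
          z ∈ G j ∧ ∀ β, ¬ I β ⊆ J.biUnion I → I β \ J.biUnion I ⊂ I j \ J.biUnion I →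
            nrm (Ihat β) z < ε * nrm (Ihat j) z} ∧
      (∀ j k, j ≠ k → ¬ I j ⊆ J.biUnion I → ¬ I k ⊆ J.biUnion I →
        (I j \ J.biUnion I ⊂ I k \ J.biUnion I ∨ I k \ J.biUnion I ⊂ I j \ J.biUnion I ∨
          Disjoint (I j \ J.biUnion I) (I k \ J.biUnion I))) ∧
      (∀ j, ¬ I j ⊆ J.biUnion I →
        (Finset.univ.filter
            (fun k => ¬ I k ⊆ J.biUnion I ∧ I k \ J.biUnion I ⊂ I j \ J.biUnion I)).biUnion
          (fun k => I k \ J.biUnion I) ⊂ I j \ J.biUnion I) := by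
  obtain rfl : Ihat = core I := funext hIhat
  obtain rfl : nrm = restrictNorm := funext fun A => funext (hnrm A)
  subst hU hS hSJ
  rw [show ⋂ j, V j = multiCone I G R W ε from Set.iInter_congr hV]
  have : Nonempty (Fin ℓ) := hJne.to_subtype.map fun j => j.1
  have hcore : ∀ j, (core I j).Nonempty := fun j => core_nonempty (h2 j)
  have hGdep' : ∀ j, DependsOn (· ∈ G j) (core I j) := fun j _ _ h => propext (hGdep j _ _ h)
  have hWdep' : DependsOn (· ∈ W) {i | ∀ j, i ∉ I j} := fun _ _ h => propext (hWdep _ _ h)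
  have hSJ := image_interior_closure_multiCone h1 hcore hε hR hGopen hGconv hGne hGcone hG0
    hGdep' hWopen hWconv hWdep' J
  refine ⟨?_, hSJ, NestedOrDisjoint.sdiff_biUnion h1 hcore J,
    fun j hj => NestedOrDisjoint.biUnion_sdiff_ssubset h1 hcore hj⟩
  obtain ⟨y, hy⟩ := multiCone_nonempty h1 hε hR hGne hGcone hG0 hGdep' hWne hWdep'
  exact hSJ ▸ ⟨_, piecewise_zero_mem_restrictedMultiCone h1 hcore hGdep' hWdep' hy⟩

/-- Lemma 7.1, 1.: for nonempty `J`, the trace `S_J`, the relative interior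
of `closure S ∩ Z_J` in `Z_J`, is a nonempty multi-cone in `Z_J`: it equals
`S(U ∩ Z_J, {G j}_{j ∈ J*}, ε)` for `J* = {j : ¬ I j ⊆ I_J}`, and the restricted family
`I j \ I_J` (`j ∈ J*`) again satisfies conditions (1.2). -/
theorem stmt_8
    (n ℓ : ℕ) (I : Fin ℓ → Finset (Fin n))
    (h1 : ∀ j k, j ≠ k → I j ⊂ I k ∨ I k ⊂ I j ∨ Disjoint (I j) (I k))
    (h2 : ∀ j, (Finset.univ.filter (fun k => I k ⊂ I j)).biUnion I ⊂ I j)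
    (Ihat : Fin ℓ → Finset (Fin n))
    (hIhat : ∀ j, Ihat j = I j \ (Finset.univ.filter (fun k => I k ⊂ I j)).biUnion I)
    (nrm : Finset (Fin n) → (Fin n → ℂ) → ℝ)
    (hnrm : ∀ A z, nrm A z = Real.sqrt (∑ i ∈ A, ‖z i‖ ^ 2))
    (G : Fin ℓ → Set (Fin n → ℂ))
    (hGopen : ∀ j, IsOpen (G j))
    (hGconv : ∀ j, Convex ℝ (G j))
    (hGcone : ∀ j, ∀ z ∈ G j, ∀ c : ℝ, 0 < c → c • z ∈ G j)
    (hGne : ∀ j, (G j).Nonempty)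
    (hG0 : ∀ j, (0 : Fin n → ℂ) ∉ G j)
    (hGdep : ∀ j, ∀ z w : Fin n → ℂ, (∀ i ∈ Ihat j, z i = w i) → (z ∈ G j ↔ w ∈ G j))
    (hGproper : ∀ j, ∀ z, z ∈ closure (G j) → -z ∈ closure (G j) → ∀ i ∈ Ihat j, z i = 0)
    (R : Fin ℓ → ℝ) (hR : ∀ j, 0 < R j)
    (W : Set (Fin n → ℂ)) (hWconv : Convex ℝ W) (hWopen : IsOpen W) (hWne : W.Nonempty)
    (hWdep : ∀ z w : Fin n → ℂ, (∀ i, (∀ j, i ∉ I j) → z i = w i) → (z ∈ W ↔ w ∈ W))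
    (U : Set (Fin n → ℂ))
    (hU : U = {z | (∀ j, nrm (Ihat j) z < R j) ∧ z ∈ W})
    (ε : ℝ) (hε : 0 < ε)
    (V : Fin ℓ → Set (Fin n → ℂ))
    (hV : ∀ j, V j = {z ∈ U | z ∈ G j ∧ ∀ β, I β ⊂ I j → nrm (Ihat β) z < ε * nrm (Ihat j) z})
    (S : Set (Fin n → ℂ)) (hS : S = ⋂ j, V j)
    (J : Finset (Fin ℓ)) (hJne : J.Nonempty)
    (SJ : Set (Fin n → ℂ))
    (hSJ : SJ = Subtype.val ''
      interior {z : {w : Fin n → ℂ // ∀ i ∈ J.biUnion I, w i = 0} | (z : Fin n → ℂ) ∈ closure S})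
    : SJ.Nonempty ∧
      SJ = {z | (∀ i ∈ J.biUnion I, z i = 0) ∧ z ∈ U ∧
        ∀ j, ¬ I j ⊆ J.biUnion I →
          z ∈ G j ∧ ∀ β, ¬ I β ⊆ J.biUnion I → I β \ J.biUnion I ⊂ I j \ J.biUnion I →
            nrm (Ihat β) z < ε * nrm (Ihat j) z} ∧
      (∀ j k, j ≠ k → ¬ I j ⊆ J.biUnion I → ¬ I k ⊆ J.biUnion I →
        (I j \ J.biUnion I ⊂ I k \ J.biUnion I ∨ I k \ J.biUnion I ⊂ I j \ J.biUnion I ∨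
          Disjoint (I j \ J.biUnion I) (I k \ J.biUnion I))) ∧
      (∀ j, ¬ I j ⊆ J.biUnion I →
        (Finset.univ.filter
            (fun k => ¬ I k ⊆ J.biUnion I ∧ I k \ J.biUnion I ⊂ I j \ J.biUnion I)).biUnion
          (fun k => I k \ J.biUnion I) ⊂ I j \ J.biUnion I) :=
  stmt_8_general n ℓ I h1 h2 Ihat hIhat nrm hnrm G hGopen hGconv hGcone hGne hG0 hGdep R hR W hWconv
    hWopen hWne hWdep U hU ε hε V hV S hS J hJne SJ hSJ
end

section
/- Let $S=S(U,\{G_j\},\epsilon)$ be a proper multi-cone and $J$ a nonempty subset of $\{1,\dots,\ell\}$. Let $\pi_J:X\to Z_J$ be the coordinate projection setting $z_i=0$ for $i\in I_J$. Then $\pi_J(S)=S_J$. -/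
/-!
Split the indices into those with `I k ⊆ I_J` and the others. By laminarity, for the others
`Î_k` is disjoint from `I_J`, so their conditions (together with `z ∈ W`) only see coordinates
that `π_J` keeps and cut out an open set `O` with `π_J(S) ⊆ O ∩ Z_J`; the conditions of the
first kind only see coordinates that `π_J` kills. Conversely, for `w ∈ O ∩ Z_J` and any
`z₀ ∈ S`, the point equal to `t • z₀` on `I_J` and to `w` elsewhere lies in `S` for small
`t > 0`, so `w ∈ π_J(S)` and, letting `t → 0`, `w ∈ closure S`; thus `O ∩ Z_J ⊆ S_J`.
Finally a point `w` of `S_J` lies in `O`: the sets `G_k`, `W` involved are convex, open and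
invariant under moving the `I_J`-coordinates, so `w` being in the interior of their closures
puts it in them, and each non-strict inequality valid on `closure S` becomes strict because it
would fail after scaling the `Î_k`-coordinates of `w` by a factor slightly above `1`.
-/

open Set Filter Topology Finset

lemma image_val_interior_setOf_mem {X : Type*} [TopologicalSpace X] (p : X → Prop) (t : Set X) :
    Subtype.val '' interior {z : {x // p x} | (z : X) ∈ t} = {x | p x ∧ t ∈ 𝓝[{x | p x}] x} := by
  ext x
  constructor
  · rintro ⟨y, hy, rfl⟩
    exact ⟨y.2, preimage_coe_mem_nhds_subtype.1 (mem_interior_iff_mem_nhds.1 hy)⟩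
  · rintro ⟨hx, ht⟩
    exact ⟨⟨x, hx⟩, mem_interior_iff_mem_nhds.2 (preimage_coe_mem_nhds_subtype.2 ht), rfl⟩

namespace MultiCone

variable {ι σ : Type*}

noncomputable def normOn (A : Finset σ) (z : σ → ℂ) : ℝ := √(∑ i ∈ A, ‖z i‖ ^ 2)

lemma normOn_nonneg (A : Finset σ) (z : σ → ℂ) : 0 ≤ normOn A z :=
  Real.sqrt_nonneg _

lemma normOn_congr {A : Finset σ} {z w : σ → ℂ} (h : ∀ i ∈ A, z i = w i) :
    normOn A z = normOn A w := by
  unfold normOn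
  rw [Finset.sum_congr rfl fun i hi => by rw [h i hi]]

lemma normOn_smul (A : Finset σ) (z : σ → ℂ) {t : ℝ} (ht : 0 ≤ t) :
    normOn A (t • z) = t * normOn A z := by
  unfold normOn
  simp_rw [Pi.smul_apply, norm_smul, mul_pow, ← Finset.mul_sum, Real.norm_eq_abs, sq_abs]
  rw [Real.sqrt_mul (sq_nonneg t), Real.sqrt_sq ht]

lemma normOn_pos {A : Finset σ} {z : σ → ℂ} (h : ∃ i ∈ A, z i ≠ 0) : 0 < normOn A z := by
  obtain ⟨i, hiA, hiz⟩ := h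
  exact Real.sqrt_pos.2 <| Finset.sum_pos' (fun _ _ => by positivity) ⟨i, hiA, by positivity⟩

lemma normOn_piecewise_smul (K : Finset σ) [∀ i, Decidable (i ∈ K)] (w : σ → ℂ) {c : ℝ}
    (hc : 0 ≤ c) : normOn K (K.piecewise (c • w) w) = c * normOn K w := by
  rw [normOn_congr fun i hi => K.piecewise_eq_of_mem _ _ hi, normOn_smul _ _ hc]

@[fun_prop]
lemma continuous_normOn (A : Finset σ) : Continuous (normOn A) := by
  unfold normOn
  fun_prop

variable [Fintype ι] [DecidableEq σ]

def hat (I : ι → Finset σ) (j : ι) : Finset σ :=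
  I j \ (univ.filter fun k => I k ⊂ I j).biUnion I

lemma hat_subset (I : ι → Finset σ) (j : ι) : hat I j ⊆ I j := sdiff_subset

lemma disjoint_hat_of_ssubset {I : ι → Finset σ} {j β : ι} (h : I β ⊂ I j) :
    Disjoint (hat I j) (I β) :=
  disjoint_left.2 fun _ hi hiβ =>
    (mem_sdiff.1 hi).2 (mem_biUnion.2 ⟨β, mem_filter.2 ⟨mem_univ β, h⟩, hiβ⟩)

lemma disjoint_hat_biUnion {I : ι → Finset σ}
    (hlam : ∀ j k, j ≠ k → I j ⊂ I k ∨ I k ⊂ I j ∨ Disjoint (I j) (I k))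
    {J : Finset ι} {k : ι} (hk : ¬ I k ⊆ J.biUnion I) : Disjoint (hat I k) (J.biUnion I) := by
  rw [disjoint_biUnion_right]
  intro j hj
  have hjJ := subset_biUnion_of_mem I hj
  rcases eq_or_ne j k with rfl | hjk
  · exact absurd hjJ hk
  rcases hlam j k hjk with hjk | hkj | hdisj
  · exact disjoint_hat_of_ssubset hjk
  · exact absurd (hkj.subset.trans hjJ) hk
  · exact hdisj.symm.mono_left (hat_subset I k)

structure IsMultiCone (I : ι → Finset σ) (G : ι → Set (σ → ℂ)) (R : ι → ℝ)
    (W : Set (σ → ℂ)) (ε : ℝ) : Prop where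
  laminar : ∀ j k, j ≠ k → I j ⊂ I k ∨ I k ⊂ I j ∨ Disjoint (I j) (I k)
  isOpen_G : ∀ j, IsOpen (G j)
  convex_G : ∀ j, Convex ℝ (G j)
  smul_mem_G : ∀ j, ∀ z ∈ G j, ∀ c : ℝ, 0 < c → c • z ∈ G j
  nonempty_G : ∀ j, (G j).Nonempty
  zero_notMem_G : ∀ j, (0 : σ → ℂ) ∉ G j
  mem_G_congr : ∀ j z w, (∀ i ∈ hat I j, z i = w i) → (z ∈ G j ↔ w ∈ G j)
  pos_R : ∀ j, 0 < R j
  isOpen_W : IsOpen W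
  convex_W : Convex ℝ W
  nonempty_W : W.Nonempty
  mem_W_congr : ∀ z w, (∀ i, (∀ j, i ∉ I j) → z i = w i) → (z ∈ W ↔ w ∈ W)
  pos_ε : 0 < ε

variable {I : ι → Finset σ} {G : ι → Set (σ → ℂ)} {R : ι → ℝ} {W : Set (σ → ℂ)} {ε : ℝ}

lemma IsMultiCone.normOn_pos_of_mem_G (hM : IsMultiCone I G R W ε) {j : ι} {z : σ → ℂ}
    (hz : z ∈ G j) : 0 < normOn (hat I j) z := by
  refine normOn_pos ?_
  by_contra! h
  exact hM.zero_notMem_G j ((hM.mem_G_congr j z 0 h).1 hz)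

variable (I G R W ε) in
/-- `multiConeOn I G R W ε univ` is `S`; for smaller `T` only the conditions attached to the
indices in `T` are imposed. -/
def multiConeOn (T : Set ι) : Set (σ → ℂ) :=
  W ∩ ⋂ j ∈ T, ({z | normOn (hat I j) z < R j} ∩ G j ∩
    ⋂ β ∈ T, ⋂ (_ : I β ⊂ I j), {z | normOn (hat I β) z < ε * normOn (hat I j) z})

lemma mem_multiConeOn {T : Set ι} {z : σ → ℂ} :
    z ∈ multiConeOn I G R W ε T ↔ z ∈ W ∧ ∀ j ∈ T, normOn (hat I j) z < R j ∧ z ∈ G j ∧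
      ∀ β ∈ T, I β ⊂ I j → normOn (hat I β) z < ε * normOn (hat I j) z := by
  simp [multiConeOn, and_assoc]

lemma iInter_eq_multiConeOn_univ [Nonempty ι] :
    ⋂ j, {z ∈ {z | (∀ k, normOn (hat I k) z < R k) ∧ z ∈ W} | z ∈ G j ∧
      ∀ β, I β ⊂ I j → normOn (hat I β) z < ε * normOn (hat I j) z} =
      multiConeOn I G R W ε univ := by
  ext z
  simp only [mem_iInter, mem_sep_iff, mem_multiConeOn, Set.mem_univ, forall_const]
  constructor
  · intro h
    obtain ⟨j₀⟩ := ‹Nonempty ι›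
    exact ⟨(h j₀).1.2, fun j => ⟨(h j).1.1 j, (h j).2⟩⟩
  · rintro ⟨hW, h⟩ j
    exact ⟨⟨fun k => (h k).1, hW⟩, (h j).2⟩

lemma isOpen_multiConeOn (hG : ∀ j, IsOpen (G j)) (hW : IsOpen W) (T : Set ι) :
    IsOpen (multiConeOn I G R W ε T) := by
  refine hW.inter (T.toFinite.isOpen_biInter fun j _ => ?_)
  refine ((isOpen_lt (by fun_prop) continuous_const).inter (hG j)).inter
    (T.toFinite.isOpen_biInter fun β _ => isOpen_iInter_of_finite fun _ => ?_)
  exact isOpen_lt (by fun_prop) (by fun_prop)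

lemma multiConeOn_anti {T T' : Set ι} (h : T ⊆ T') :
    multiConeOn I G R W ε T' ⊆ multiConeOn I G R W ε T := fun z hz => by
  rw [mem_multiConeOn] at hz ⊢
  exact ⟨hz.1, fun j hj => (hz.2 j (h hj)).imp_right (And.imp_right fun hβ β hβT => hβ β (h hβT))⟩

lemma multiConeOn_congr (hM : IsMultiCone I G R W ε) {T : Set ι} {z w : σ → ℂ}
    (hfree : ∀ i, (∀ j, i ∉ I j) → z i = w i) (hT : ∀ j ∈ T, ∀ i ∈ hat I j, z i = w i) :
    z ∈ multiConeOn I G R W ε T ↔ w ∈ multiConeOn I G R W ε T := by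
  simp only [mem_multiConeOn, hM.mem_W_congr z w hfree]
  refine and_congr_right' (forall₂_congr fun j hj => ?_)
  rw [normOn_congr (hT j hj), hM.mem_G_congr j z w (hT j hj)]
  refine and_congr_right' (and_congr_right' (forall₂_congr fun β hβ => ?_))
  rw [normOn_congr (hT β hβ)]

def proj (A : Finset σ) (z : σ → ℂ) : σ → ℂ := A.piecewise 0 z

lemma continuous_finset_piecewise {X β : Type*} [TopologicalSpace X] [TopologicalSpace β]
    (A : Finset σ) {f g : X → σ → β} (hf : Continuous f) (hg : Continuous g) :
    Continuous fun x => A.piecewise (f x) (g x) :=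
  continuous_pi fun i => by
    by_cases hi : i ∈ A
    · simp only [A.piecewise_eq_of_mem _ _ hi]; fun_prop
    · simp only [A.piecewise_eq_of_notMem _ _ hi]; fun_prop

lemma proj_mem_multiConeOn (hM : IsMultiCone I G R W ε) (J : Finset ι) {z : σ → ℂ}
    (hz : z ∈ multiConeOn I G R W ε univ) :
    proj (J.biUnion I) z ∈ multiConeOn I G R W ε {k | ¬ I k ⊆ J.biUnion I} := by
  refine (multiConeOn_congr hM (fun i hi => ?_) fun k hk i hi => ?_).2
    (multiConeOn_anti (Set.subset_univ _) hz)
  · exact Finset.piecewise_eq_of_notMem _ _ _ (by simp [hi])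
  · exact Finset.piecewise_eq_of_notMem _ _ _
      (disjoint_left.1 (disjoint_hat_biUnion hM.laminar hk) hi)

lemma piecewise_smul_mem_multiConeOn (hM : IsMultiCone I G R W ε) {J : Finset ι} {z₀ w : σ → ℂ}
    (hz₀ : z₀ ∈ multiConeOn I G R W ε univ)
    (hw : w ∈ multiConeOn I G R W ε {k | ¬ I k ⊆ J.biUnion I}) {t : ℝ} (ht₀ : 0 < t) (ht₁ : t ≤ 1)
    (hsmall : ∀ j β, ¬ I j ⊆ J.biUnion I → t * normOn (hat I β) z₀ < ε * normOn (hat I j) w) :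
    (J.biUnion I).piecewise (t • z₀) w ∈ multiConeOn I G R W ε univ := by
  set y := (J.biUnion I).piecewise (t • z₀) w
  have inside : ∀ k, I k ⊆ J.biUnion I → ∀ i ∈ hat I k, y i = (t • z₀) i := fun k hk i hi =>
    Finset.piecewise_eq_of_mem _ _ _ (hk (hat_subset I k hi))
  have outside : ∀ k, ¬ I k ⊆ J.biUnion I → ∀ i ∈ hat I k, y i = w i := fun k hk i hi =>
    Finset.piecewise_eq_of_notMem _ _ _ (disjoint_left.1 (disjoint_hat_biUnion hM.laminar hk) hi)
  rw [mem_multiConeOn] at hz₀ hw ⊢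
  refine ⟨(hM.mem_W_congr y w fun i hi =>
    Finset.piecewise_eq_of_notMem _ _ _ (by simp [hi])).2 hw.1, fun j _ => ?_⟩
  by_cases hj : I j ⊆ J.biUnion I
  · obtain ⟨hR, hG, hε⟩ := hz₀.2 j trivial
    rw [normOn_congr (inside j hj), normOn_smul _ _ ht₀.le]
    refine ⟨by nlinarith [normOn_nonneg (hat I j) z₀], (hM.mem_G_congr j y _ (inside j hj)).2
      (hM.smul_mem_G j z₀ hG t ht₀), fun β _ hβj => ?_⟩
    rw [normOn_congr (inside β (hβj.subset.trans hj)), normOn_smul _ _ ht₀.le, mul_left_comm]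
    exact mul_lt_mul_of_pos_left (hε β trivial hβj) ht₀
  · obtain ⟨hR, hG, hε⟩ := hw.2 j hj
    rw [normOn_congr (outside j hj)]
    refine ⟨hR, (hM.mem_G_congr j y w (outside j hj)).2 hG, fun β _ hβj => ?_⟩
    by_cases hβ : I β ⊆ J.biUnion I
    · rw [normOn_congr (inside β hβ), normOn_smul _ _ ht₀.le]
      exact hsmall j β hj
    · rw [normOn_congr (outside β hβ)]
      exact hε β hβ hβj

lemma eventually_piecewise_smul_mem_multiConeOn (hM : IsMultiCone I G R W ε) {J : Finset ι}
    {z₀ w : σ → ℂ} (hz₀ : z₀ ∈ multiConeOn I G R W ε univ)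
    (hw : w ∈ multiConeOn I G R W ε {k | ¬ I k ⊆ J.biUnion I}) :
    ∀ᶠ t in 𝓝[>] (0 : ℝ), (J.biUnion I).piecewise (t • z₀) w ∈ multiConeOn I G R W ε univ := by
  have hsmall : ∀ j β, ∀ᶠ t in 𝓝[>] (0 : ℝ), ¬ I j ⊆ J.biUnion I →
      t * normOn (hat I β) z₀ < ε * normOn (hat I j) w := by
    intro j β
    by_cases hj : I j ⊆ J.biUnion I
    · exact Eventually.of_forall fun _ h => absurd hj h
    have hpos : 0 < ε * normOn (hat I j) w :=
      mul_pos hM.pos_ε (hM.normOn_pos_of_mem_G ((mem_multiConeOn.1 hw).2 j hj).2.1)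
    have hlim : Tendsto (fun t : ℝ => t * normOn (hat I β) z₀) (𝓝[>] 0) (𝓝 0) := by
      simpa using ((continuous_mul_const (normOn (hat I β) z₀)).tendsto 0).mono_left
        nhdsWithin_le_nhds
    exact (hlim.eventually_lt_const hpos).mono fun _ h _ => h
  filter_upwards [eventually_all.2 fun j => eventually_all.2 (hsmall j), Ioc_mem_nhdsGT one_pos]
    with t hsmall ht
  exact piecewise_smul_mem_multiConeOn hM hz₀ hw ht.1 ht.2 fun j β hj => hsmall j β hj

lemma tendsto_piecewise_smul {A : Finset σ} (z₀ : σ → ℂ) {w : σ → ℂ} (hw : ∀ i ∈ A, w i = 0) :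
    Tendsto (fun t : ℝ => A.piecewise (t • z₀) w) (𝓝[>] 0) (𝓝 w) := by
  have h₀ : A.piecewise ((0 : ℝ) • z₀) w = w := funext fun i => by
    by_cases hi : i ∈ A <;> simp [hi, hw]
  have hγ : Continuous fun t : ℝ => A.piecewise (t • z₀) w :=
    continuous_finset_piecewise A (by fun_prop) continuous_const
  convert (hγ.tendsto 0).mono_left nhdsWithin_le_nhds
  exact h₀.symm

lemma mem_image_proj (hM : IsMultiCone I G R W ε) {J : Finset ι}
    (hne : (multiConeOn I G R W ε univ).Nonempty) {w : σ → ℂ}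
    (hw : w ∈ multiConeOn I G R W ε {k | ¬ I k ⊆ J.biUnion I})
    (hwZ : ∀ i ∈ J.biUnion I, w i = 0) :
    w ∈ proj (J.biUnion I) '' multiConeOn I G R W ε univ := by
  obtain ⟨z₀, hz₀⟩ := hne
  obtain ⟨t, ht⟩ := (eventually_piecewise_smul_mem_multiConeOn hM hz₀ hw).exists
  refine ⟨_, ht, funext fun i => ?_⟩
  by_cases hi : i ∈ J.biUnion I <;> simp [proj, hi, hwZ]

lemma mem_closure_multiConeOn (hM : IsMultiCone I G R W ε) {J : Finset ι}
    (hne : (multiConeOn I G R W ε univ).Nonempty) {w : σ → ℂ}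
    (hw : w ∈ multiConeOn I G R W ε {k | ¬ I k ⊆ J.biUnion I})
    (hwZ : ∀ i ∈ J.biUnion I, w i = 0) : w ∈ closure (multiConeOn I G R W ε univ) := by
  obtain ⟨z₀, hz₀⟩ := hne
  exact mem_closure_of_tendsto (tendsto_piecewise_smul z₀ hwZ)
    (eventually_piecewise_smul_mem_multiConeOn hM hz₀ hw)

lemma mem_of_eventually_mem_closure {A : Finset σ} {s : Set (σ → ℂ)} (hconv : Convex ℝ s)
    (hopen : IsOpen s) (hne : s.Nonempty) (hs : ∀ z, proj A z ∈ s ↔ z ∈ s) {w : σ → ℂ}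
    (hwZ : ∀ i ∈ A, w i = 0) (hw : ∀ᶠ y in 𝓝[{y | ∀ i ∈ A, y i = 0}] w, y ∈ closure s) :
    w ∈ s := by
  have hPw : proj A w = w := funext fun i => by by_cases hi : i ∈ A <;> simp [proj, hi, hwZ]
  have hP : Tendsto (proj A) (𝓝 w) (𝓝[{y | ∀ i ∈ A, y i = 0}] w) := by
    refine tendsto_nhdsWithin_iff.2
      ⟨?_, Eventually.of_forall fun z i hi => A.piecewise_eq_of_mem _ _ hi⟩
    have hcont : Continuous (proj A) := continuous_finset_piecewise A continuous_const continuous_id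
    simpa only [hPw] using hcont.tendsto w
  -- `s` is invariant under translations by vectors supported in `A`, hence so is `closure s`.
  have hcl : ∀ y, proj A y ∈ closure s → y ∈ closure s := by
    intro y hy
    have hmaps : MapsTo (· + (y - proj A y)) s s := fun z hz => by
      refine (hs _).1 ?_
      convert (hs z).2 hz using 1
      funext i
      by_cases hi : i ∈ A <;> simp [proj, hi]
    simpa using map_mem_closure (continuous_add_const _) hy hmaps
  have hint : w ∈ interior (closure s) :=
    mem_interior_iff_mem_nhds.2 ((hP.eventually hw).mono hcl)
  rwa [hconv.interior_closure_eq_interior_of_nonempty_interior (by rwa [hopen.interior_eq]),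
    hopen.interior_eq] at hint

lemma exists_piecewise_smul_mem {A K : Finset σ} (hK : Disjoint K A) {s : Set (σ → ℂ)}
    {w : σ → ℂ} (hwZ : ∀ i ∈ A, w i = 0) (hw : ∀ᶠ y in 𝓝[{y | ∀ i ∈ A, y i = 0}] w, y ∈ s) :
    ∃ c : ℝ, 1 < c ∧ K.piecewise (c • w) w ∈ s := by
  have hcont : Continuous fun c : ℝ => K.piecewise (c • w) w :=
    continuous_finset_piecewise K (by fun_prop) continuous_const
  have hγ : Tendsto (fun c : ℝ => K.piecewise (c • w) w) (𝓝[>] 1)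
      (𝓝[{y | ∀ i ∈ A, y i = 0}] w) := by
    refine tendsto_nhdsWithin_iff.2 ⟨?_, Eventually.of_forall fun c i hi => ?_⟩
    · convert (hcont.tendsto 1).mono_left nhdsWithin_le_nhds
      simp [Finset.piecewise_same]
    · rw [K.piecewise_eq_of_notMem _ _ (disjoint_right.1 hK hi)]
      exact hwZ i hi
  exact ((hγ.eventually hw).and self_mem_nhdsWithin).exists.imp fun c hc => ⟨hc.2, hc.1⟩

lemma normOn_le_of_mem_closure {T : Set ι} {z : σ → ℂ}
    (hz : z ∈ closure (multiConeOn I G R W ε T)) {j : ι} (hj : j ∈ T) :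
    normOn (hat I j) z ≤ R j :=
  closure_lt_subset_le (continuous_normOn _) continuous_const
    (closure_mono (fun _ hy => ((mem_multiConeOn.1 hy).2 j hj).1) hz)

lemma normOn_le_mul_of_mem_closure {T : Set ι} {z : σ → ℂ}
    (hz : z ∈ closure (multiConeOn I G R W ε T)) {j β : ι} (hj : j ∈ T) (hβ : β ∈ T)
    (hβj : I β ⊂ I j) : normOn (hat I β) z ≤ ε * normOn (hat I j) z :=
  closure_lt_subset_le (continuous_normOn _) (by fun_prop)
    (closure_mono (fun _ hy => ((mem_multiConeOn.1 hy).2 j hj).2.2 β hβ hβj) hz)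

lemma mem_multiConeOn_of_eventually (hM : IsMultiCone I G R W ε) {J : Finset ι} {w : σ → ℂ}
    (hwZ : ∀ i ∈ J.biUnion I, w i = 0)
    (hw : ∀ᶠ y in 𝓝[{y | ∀ i ∈ J.biUnion I, y i = 0}] w,
      y ∈ closure (multiConeOn I G R W ε univ)) :
    w ∈ multiConeOn I G R W ε {k | ¬ I k ⊆ J.biUnion I} := by
  have hmem : ∀ s, Convex ℝ s → IsOpen s → s.Nonempty →
      (∀ z, proj (J.biUnion I) z ∈ s ↔ z ∈ s) → multiConeOn I G R W ε univ ⊆ s → w ∈ s :=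
    fun s hconv hopen hne hs hS =>
      mem_of_eventually_mem_closure hconv hopen hne hs hwZ (hw.mono fun _ hy => closure_mono hS hy)
  have hW : w ∈ W := hmem W hM.convex_W hM.isOpen_W hM.nonempty_W
    (fun z => hM.mem_W_congr _ _ fun i hi => Finset.piecewise_eq_of_notMem _ _ _ (by simp [hi]))
    fun z hz => (mem_multiConeOn.1 hz).1
  refine mem_multiConeOn.2 ⟨hW, fun j hj => ?_⟩
  have hG : w ∈ G j := hmem (G j) (hM.convex_G j) (hM.isOpen_G j) (hM.nonempty_G j)
    (fun z => hM.mem_G_congr j _ _ fun i hi => Finset.piecewise_eq_of_notMem _ _ _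
      (disjoint_left.1 (disjoint_hat_biUnion hM.laminar hj) hi))
    fun z hz => ((mem_multiConeOn.1 hz).2 j trivial).2.1
  have hscale : ∀ k, ¬ I k ⊆ J.biUnion I → ∃ c : ℝ, 1 < c ∧
      (hat I k).piecewise (c • w) w ∈ closure (multiConeOn I G R W ε univ) := fun k hk =>
    exists_piecewise_smul_mem (disjoint_hat_biUnion hM.laminar hk) hwZ hw
  refine ⟨?_, hG, fun β hβ hβj => ?_⟩
  · obtain ⟨c, hc, hcS⟩ := hscale j hj
    have hle := normOn_le_of_mem_closure hcS (mem_univ j)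
    rw [normOn_piecewise_smul _ _ (by linarith)] at hle
    nlinarith [hM.pos_R j, normOn_nonneg (hat I j) w]
  · obtain ⟨c, hc, hcS⟩ := hscale β hβ
    have hle := normOn_le_mul_of_mem_closure hcS (mem_univ j) (mem_univ β) hβj
    rw [normOn_piecewise_smul _ _ (by linarith), normOn_congr fun i hi =>
      (hat I β).piecewise_eq_of_notMem _ _ fun hiβ =>
        disjoint_left.1 (disjoint_hat_of_ssubset hβj) hi (hat_subset I β hiβ)] at hle
    have hpos := mul_pos hM.pos_ε (hM.normOn_pos_of_mem_G hG)
    by_contra! hge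
    nlinarith [mul_lt_mul_of_pos_right hc (hpos.trans_le hge)]

theorem proj_image_multiConeOn (hM : IsMultiCone I G R W ε) (J : Finset ι)
    (hne : (multiConeOn I G R W ε univ).Nonempty) :
    proj (J.biUnion I) '' multiConeOn I G R W ε univ =
      multiConeOn I G R W ε {k | ¬ I k ⊆ J.biUnion I} ∩ {w | ∀ i ∈ J.biUnion I, w i = 0} := by
  refine subset_antisymm ?_ fun w hw => mem_image_proj hM hne hw.1 hw.2
  rintro _ ⟨z, hz, rfl⟩
  exact ⟨proj_mem_multiConeOn hM J hz, fun i hi => Finset.piecewise_eq_of_mem _ _ _ hi⟩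

theorem setOf_closure_mem_nhdsWithin_eq (hM : IsMultiCone I G R W ε) (J : Finset ι)
    (hne : (multiConeOn I G R W ε univ).Nonempty) :
    {w | (∀ i ∈ J.biUnion I, w i = 0) ∧ closure (multiConeOn I G R W ε univ) ∈
        𝓝[{w | ∀ i ∈ J.biUnion I, w i = 0}] w} =
      multiConeOn I G R W ε {k | ¬ I k ⊆ J.biUnion I} ∩ {w | ∀ i ∈ J.biUnion I, w i = 0} := by
  refine subset_antisymm (fun w hw => ⟨mem_multiConeOn_of_eventually hM hw.1 hw.2, hw.1⟩)
    fun w hw => ⟨hw.2, ?_⟩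
  have hO := (isOpen_multiConeOn hM.isOpen_G hM.isOpen_W _).mem_nhds hw.1
  exact mem_of_superset (inter_mem_nhdsWithin _ hO) fun y hy =>
    mem_closure_multiConeOn hM hne hy.2 hy.1

end MultiCone

theorem stmt_12_general
    (n ℓ : ℕ) (I : Fin ℓ → Finset (Fin n))
    (h1 : ∀ j k, j ≠ k → I j ⊂ I k ∨ I k ⊂ I j ∨ Disjoint (I j) (I k))
    (Ihat : Fin ℓ → Finset (Fin n))
    (hIhat : ∀ j, Ihat j = I j \ (Finset.univ.filter (fun k => I k ⊂ I j)).biUnion I)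
    (nrm : Finset (Fin n) → (Fin n → ℂ) → ℝ)
    (hnrm : ∀ A z, nrm A z = Real.sqrt (∑ i ∈ A, ‖z i‖ ^ 2))
    (G : Fin ℓ → Set (Fin n → ℂ))
    (hGopen : ∀ j, IsOpen (G j))
    (hGconv : ∀ j, Convex ℝ (G j))
    (hGcone : ∀ j, ∀ z ∈ G j, ∀ c : ℝ, 0 < c → c • z ∈ G j)
    (hGne : ∀ j, (G j).Nonempty)
    (hG0 : ∀ j, (0 : Fin n → ℂ) ∉ G j)
    (hGdep : ∀ j, ∀ z w : Fin n → ℂ, (∀ i ∈ Ihat j, z i = w i) → (z ∈ G j ↔ w ∈ G j))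
    (R : Fin ℓ → ℝ) (hR : ∀ j, 0 < R j)
    (W : Set (Fin n → ℂ)) (hWconv : Convex ℝ W) (hWopen : IsOpen W) (hWne : W.Nonempty)
    (hWdep : ∀ z w : Fin n → ℂ, (∀ i, (∀ j, i ∉ I j) → z i = w i) → (z ∈ W ↔ w ∈ W))
    (U : Set (Fin n → ℂ))
    (hU : U = {z | (∀ j, nrm (Ihat j) z < R j) ∧ z ∈ W})
    (ε : ℝ) (hε : 0 < ε)
    (V : Fin ℓ → Set (Fin n → ℂ))
    (hV : ∀ j, V j = {z ∈ U | z ∈ G j ∧ ∀ β, I β ⊂ I j → nrm (Ihat β) z < ε * nrm (Ihat j) z})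
    (S : Set (Fin n → ℂ)) (hS : S = ⋂ j, V j)
    (J : Finset (Fin ℓ)) (hJne : J.Nonempty)
    (SJ : Set (Fin n → ℂ))
    (hSJ : SJ = Subtype.val ''
      interior {z : {w : Fin n → ℂ // ∀ i ∈ J.biUnion I, w i = 0} | (z : Fin n → ℂ) ∈ closure S})
    : (fun z : Fin n → ℂ => fun i => if i ∈ J.biUnion I then 0 else z i) '' S = SJ := by
  obtain rfl : Ihat = MultiCone.hat I := funext hIhat
  obtain rfl : nrm = MultiCone.normOn := funext fun A => funext (hnrm A)
  have hM : MultiCone.IsMultiCone I G R W ε :=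
    ⟨h1, hGopen, hGconv, hGcone, hGne, hG0, hGdep, hR, hWopen, hWconv, hWne, hWdep, hε⟩
  have : Nonempty (Fin ℓ) := hJne.to_type
  obtain rfl : S = MultiCone.multiConeOn I G R W ε univ := by
    rw [hS, ← MultiCone.iInter_eq_multiConeOn_univ]
    exact iInter_congr fun j => by rw [hV, hU]
  subst hSJ
  rcases (MultiCone.multiConeOn I G R W ε univ).eq_empty_or_nonempty with hempty | hne
  · simp [hempty]
  · rw [image_val_interior_setOf_mem, MultiCone.setOf_closure_mem_nhdsWithin_eq hM J hne]
    exact MultiCone.proj_image_multiConeOn hM J hne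

/-- Corollary 7.4: for nonempty `J`, the coordinate projection `π_J`
(setting `z i = 0` for `i ∈ I_J`) maps `S` onto `S_J`. -/
theorem stmt_12
    (n ℓ : ℕ) (I : Fin ℓ → Finset (Fin n))
    (h1 : ∀ j k, j ≠ k → I j ⊂ I k ∨ I k ⊂ I j ∨ Disjoint (I j) (I k))
    (h2 : ∀ j, (Finset.univ.filter (fun k => I k ⊂ I j)).biUnion I ⊂ I j)
    (Ihat : Fin ℓ → Finset (Fin n))
    (hIhat : ∀ j, Ihat j = I j \ (Finset.univ.filter (fun k => I k ⊂ I j)).biUnion I)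
    (nrm : Finset (Fin n) → (Fin n → ℂ) → ℝ)
    (hnrm : ∀ A z, nrm A z = Real.sqrt (∑ i ∈ A, ‖z i‖ ^ 2))
    (G : Fin ℓ → Set (Fin n → ℂ))
    (hGopen : ∀ j, IsOpen (G j))
    (hGconv : ∀ j, Convex ℝ (G j))
    (hGcone : ∀ j, ∀ z ∈ G j, ∀ c : ℝ, 0 < c → c • z ∈ G j)
    (hGne : ∀ j, (G j).Nonempty)
    (hG0 : ∀ j, (0 : Fin n → ℂ) ∉ G j)
    (hGdep : ∀ j, ∀ z w : Fin n → ℂ, (∀ i ∈ Ihat j, z i = w i) → (z ∈ G j ↔ w ∈ G j))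
    (hGproper : ∀ j, ∀ z, z ∈ closure (G j) → -z ∈ closure (G j) → ∀ i ∈ Ihat j, z i = 0)
    (R : Fin ℓ → ℝ) (hR : ∀ j, 0 < R j)
    (W : Set (Fin n → ℂ)) (hWconv : Convex ℝ W) (hWopen : IsOpen W) (hWne : W.Nonempty)
    (hWdep : ∀ z w : Fin n → ℂ, (∀ i, (∀ j, i ∉ I j) → z i = w i) → (z ∈ W ↔ w ∈ W))
    (U : Set (Fin n → ℂ))
    (hU : U = {z | (∀ j, nrm (Ihat j) z < R j) ∧ z ∈ W})
    (ε : ℝ) (hε : 0 < ε)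
    (V : Fin ℓ → Set (Fin n → ℂ))
    (hV : ∀ j, V j = {z ∈ U | z ∈ G j ∧ ∀ β, I β ⊂ I j → nrm (Ihat β) z < ε * nrm (Ihat j) z})
    (S : Set (Fin n → ℂ)) (hS : S = ⋂ j, V j)
    (J : Finset (Fin ℓ)) (hJne : J.Nonempty)
    (SJ : Set (Fin n → ℂ))
    (hSJ : SJ = Subtype.val ''
      interior {z : {w : Fin n → ℂ // ∀ i ∈ J.biUnion I, w i = 0} | (z : Fin n → ℂ) ∈ closure S})
    : (fun z : Fin n → ℂ => fun i => if i ∈ J.biUnion I then 0 else z i) '' S = SJ :=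
  stmt_12_general n ℓ I h1 Ihat hIhat nrm hnrm G hGopen hGconv hGcone hGne hG0 hGdep R hR W hWconv
    hWopen hWne hWdep U hU ε hε V hV S hS J hJne SJ hSJ
end
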